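/- arXiv:2209.07729 — 8 statements merged into one kernel-verified Lean document; each statement's English description precedes it below -/
import Mathlib

section
/- Let A and B be positive semidefinite n×n real matrices with the same null space. If A ⪯ B (i.e., B - A is positive semidefinite), then B† ⪯ A†, where † denotes the Moore–Penrose pseudoinverse. -/
open Matrix

open scoped Classical in
/-- Moore–Penrose pseudoinverse of a square real matrix, defined via the four
Penrose conditions (which characterize it uniquely when a solution exists). -/
noncomputable def pinv {ι : Type*} [Fintype ι] (A : Matrix ι ι ℝ) : Matrix ι ι ℝ :=
  if h : ∃ B : Matrix ι ι ℝ,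
      A * B * A = A ∧ B * A * B = B ∧ (A * B)ᵀ = A * B ∧ (B * A)ᵀ = B * A
  then h.choose else 0

/-- Penrose conditions for `G` to be the Moore–Penrose inverse of `A`. -/
def IsPenrose {ι : Type*} [Fintype ι] (A G : Matrix ι ι ℝ) : Prop :=
  A * G * A = A ∧ G * A * G = G ∧ (A * G)ᵀ = A * G ∧ (G * A)ᵀ = G * A

lemma penrose_unique {ι : Type*} [Fintype ι] {A G1 G2 : Matrix ι ι ℝ}
    (h1 : IsPenrose A G1) (h2 : IsPenrose A G2) : G1 = G2 := by
  obtain ⟨a1, b1, c1, d1⟩ := h1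
  obtain ⟨a2, b2, c2, d2⟩ := h2
  have e1 : A * G1 = A * G2 := by
    calc A * G1 = G1ᵀ * Aᵀ := by rw [← transpose_mul, c1]
    _ = G1ᵀ * (A * G2 * A)ᵀ := by rw [a2]
    _ = G1ᵀ * (Aᵀ * (A * G2)ᵀ) := by rw [transpose_mul]
    _ = (G1ᵀ * Aᵀ) * (A * G2) := by rw [c2, mul_assoc]
    _ = (A * G1) * (A * G2) := by rw [← transpose_mul, c1]
    _ = (A * G1 * A) * G2 := by rw [mul_assoc (A * G1) A G2]
    _ = A * G2 := by rw [a1]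
  have e2 : G1 * A = G2 * A := by
    calc G1 * A = Aᵀ * G1ᵀ := by rw [← transpose_mul, d1]
    _ = (A * (G2 * A))ᵀ * G1ᵀ := by rw [← mul_assoc, a2]
    _ = ((G2 * A)ᵀ * Aᵀ) * G1ᵀ := by rw [transpose_mul]
    _ = (G2 * A) * (Aᵀ * G1ᵀ) := by rw [d2, mul_assoc]
    _ = (G2 * A) * (G1 * A) := by rw [← transpose_mul, d1]
    _ = G2 * (A * G1 * A) := by rw [mul_assoc, ← mul_assoc A G1 A]
    _ = G2 * A := by rw [a1]
  calc G1 = G1 * A * G1 := b1.symm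
  _ = G1 * (A * G2) := by rw [mul_assoc, e1]
  _ = (G1 * A) * G2 := by rw [mul_assoc]
  _ = G2 * A * G2 := by rw [e2]
  _ = G2 := b2

lemma exists_penrose {n : ℕ} {A : Matrix (Fin n) (Fin n) ℝ} (hA : A.IsHermitian) :
    ∃ G, IsPenrose A G := by
  classical
  set U : Matrix (Fin n) (Fin n) ℝ := (hA.eigenvectorUnitary : Matrix (Fin n) (Fin n) ℝ) with hU
  have hUsU : star U * U = 1 := (Unitary.mem_iff.mp hA.eigenvectorUnitary.2).1
  set d : Fin n → ℝ := RCLike.ofReal ∘ hA.eigenvalues with hd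
  have hspec : A = U * diagonal d * star U := hA.spectral_theorem
  set g : Fin n → ℝ := fun i => if d i = 0 then 0 else (d i)⁻¹ with hg
  have key : ∀ e f : Fin n → ℝ, (U * diagonal e * star U) * (U * diagonal f * star U)
      = U * diagonal (e * f) * star U := by
    intro e f
    have h1 : star U * (U * diagonal f * star U) = diagonal f * star U := by
      rw [← mul_assoc, ← mul_assoc, hUsU, one_mul]
    rw [mul_assoc (U * diagonal e) (star U), h1, mul_assoc U (diagonal e),
      ← mul_assoc (diagonal e), diagonal_mul_diagonal, ← mul_assoc]
    rfl
  have hsymm : ∀ e : Fin n → ℝ, (U * diagonal e * star U)ᵀ = U * diagonal e * star U := by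
    intro e
    rw [← conjTranspose_eq_transpose_of_trivial]
    simp [star_eq_conjTranspose, conjTranspose_mul, diagonal_conjTranspose, mul_assoc]
  have hdgd : d * g * d = d := by
    funext i
    by_cases h : d i = 0 <;> simp [hg, Pi.mul_apply, h]
  have hgdg : g * d * g = g := by
    funext i
    by_cases h : d i = 0 <;> simp [hg, Pi.mul_apply, h]
  refine ⟨U * diagonal g * star U, ?_, ?_, ?_, ?_⟩
  · rw [hspec, key, key, hdgd]
  · rw [hspec, key, key, hgdg]
  · rw [hspec, key, hsymm]
  · rw [hspec, key, hsymm]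

open scoped Classical in
lemma pinv_isPenrose {n : ℕ} {A : Matrix (Fin n) (Fin n) ℝ} (hA : A.IsHermitian) :
    IsPenrose A (pinv A) := by
  have h : ∃ B : Matrix (Fin n) (Fin n) ℝ,
      A * B * A = A ∧ B * A * B = B ∧ (A * B)ᵀ = A * B ∧ (B * A)ᵀ = B * A :=
    exists_penrose hA
  rw [pinv, dif_pos h]
  exact h.choose_spec

lemma penrose_transpose {ι : Type*} [Fintype ι] {A G : Matrix ι ι ℝ}
    (h : IsPenrose A G) (hAt : Aᵀ = A) : IsPenrose A Gᵀ := by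
  obtain ⟨a1, b1, c1, d1⟩ := h
  have h3 : A * Gᵀ = G * A := by rw [← d1, transpose_mul, hAt]
  have h4 : Gᵀ * A = A * G := by rw [← c1, transpose_mul, hAt]
  refine ⟨?_, ?_, ?_, ?_⟩
  · have t1 : A * Gᵀ * A = (Aᵀ * (G * Aᵀ))ᵀ := by
      rw [transpose_mul, transpose_mul, transpose_transpose]
    rw [t1, hAt, ← mul_assoc, a1, hAt]
  · have t2 : Gᵀ * A * Gᵀ = (G * Aᵀ * G)ᵀ := by
      rw [transpose_mul, transpose_mul, transpose_transpose, ← mul_assoc]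
    rw [t2, hAt, b1]
  · rw [h3]; exact d1
  · rw [h4]; exact c1

lemma pinv_transpose_self {n : ℕ} {A : Matrix (Fin n) (Fin n) ℝ} (hA : A.IsHermitian) :
    (pinv A)ᵀ = pinv A := by
  have hAt : Aᵀ = A := by
    rw [← conjTranspose_eq_transpose_of_trivial]; exact hA
  exact penrose_unique (penrose_transpose (pinv_isPenrose hA) hAt) (pinv_isPenrose hA)

lemma matrix_ext_of_mulVec {n : ℕ} {M N : Matrix (Fin n) (Fin n) ℝ}
    (h : ∀ y, M *ᵥ y = N *ᵥ y) : M = N := by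
  ext i j
  have := congrFun (h (Pi.single j 1)) i
  simpa [mulVec_single] using this

/-- If `A`, `B` are PSD with the same null space and `A ⪯ B`, then `B† ⪯ A†`. -/
theorem stmt0 {n : ℕ} (A B : Matrix (Fin n) (Fin n) ℝ)
    (hA : A.PosSemidef) (hB : B.PosSemidef)
    (hker : ∀ x : Fin n → ℝ, A.mulVec x = 0 ↔ B.mulVec x = 0)
    (hle : (B - A).PosSemidef) :
    (pinv A - pinv B).PosSemidef := by
  set A' := pinv A with hA'def
  set B' := pinv B with hB'def
  obtain ⟨a1, a2, a3, a4⟩ := pinv_isPenrose hA.1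
  obtain ⟨b1, b2, b3, b4⟩ := pinv_isPenrose hB.1
  rw [← hA'def] at a1 a2 a3 a4
  rw [← hB'def] at b1 b2 b3 b4
  have hA't : A'ᵀ = A' := pinv_transpose_self hA.1
  have hB't : B'ᵀ = B' := pinv_transpose_self hB.1
  have hAt : Aᵀ = A := by rw [← conjTranspose_eq_transpose_of_trivial]; exact hA.1
  have hBt : Bᵀ = B := by rw [← conjTranspose_eq_transpose_of_trivial]; exact hB.1
  have commA : A * A' = A' * A := by
    calc A * A' = (A * A')ᵀ := a3.symm
    _ = A'ᵀ * Aᵀ := transpose_mul _ _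
    _ = A' * A := by rw [hA't, hAt]
  have commB : B * B' = B' * B := by
    calc B * B' = (B * B')ᵀ := b3.symm
    _ = B'ᵀ * Bᵀ := transpose_mul _ _
    _ = B' * B := by rw [hB't, hBt]
  have hstar : ∀ u : Fin n → ℝ, star u = u := fun u => funext fun i => rfl
  -- the two range projections agree
  have hPmul : ∀ y, (A * A') *ᵥ ((B * B') *ᵥ y) = (A * A') *ᵥ y := by
    intro y
    have hBz : B *ᵥ ((B * B') *ᵥ y - y) = 0 := by
      rw [mulVec_sub, mulVec_mulVec, commB, ← mul_assoc, b1, sub_self]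
    have hAz : A *ᵥ ((B * B') *ᵥ y - y) = 0 := (hker _).mpr hBz
    have h0 : (A * A') *ᵥ ((B * B') *ᵥ y - y) = 0 := by
      rw [commA, ← mulVec_mulVec, hAz, mulVec_zero]
    rw [mulVec_sub] at h0
    exact sub_eq_zero.mp h0
  have hPmul' : ∀ y, (B * B') *ᵥ ((A * A') *ᵥ y) = (B * B') *ᵥ y := by
    intro y
    have hAz : A *ᵥ ((A * A') *ᵥ y - y) = 0 := by
      rw [mulVec_sub, mulVec_mulVec, commA, ← mul_assoc, a1, sub_self]
    have hBz : B *ᵥ ((A * A') *ᵥ y - y) = 0 := (hker _).mp hAz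
    have h0 : (B * B') *ᵥ ((A * A') *ᵥ y - y) = 0 := by
      rw [commB, ← mulVec_mulVec, hBz, mulVec_zero]
    rw [mulVec_sub] at h0
    exact sub_eq_zero.mp h0
  have m1 : (A * A') * (B * B') = A * A' :=
    matrix_ext_of_mulVec fun y => by rw [← mulVec_mulVec, hPmul y]
  have m2 : (B * B') * (A * A') = B * B' :=
    matrix_ext_of_mulVec fun y => by rw [← mulVec_mulVec, hPmul' y]
  have hPP : A * A' = B * B' := by
    calc A * A' = (A * A')ᵀ := a3.symm
    _ = ((A * A') * (B * B'))ᵀ := by rw [m1]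
    _ = (B * B')ᵀ * (A * A')ᵀ := transpose_mul _ _
    _ = (B * B') * (A * A') := by rw [a3, b3]
    _ = B * B' := m2
  have dotl : ∀ (M : Matrix (Fin n) (Fin n) ℝ) (a b : Fin n → ℝ),
      (M *ᵥ a) ⬝ᵥ b = a ⬝ᵥ (Mᵀ *ᵥ b) := by
    intro M a b
    rw [dotProduct_comm, dotProduct_mulVec, ← mulVec_transpose, dotProduct_comm]
  rw [posSemidef_iff_dotProduct_mulVec]
  constructor
  · show (A' - B')ᴴ = A' - B'
    rw [conjTranspose_eq_transpose_of_trivial, transpose_sub, hA't, hB't]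
  · intro v
    rw [hstar]
    set x := B' *ᵥ v with hx
    set w := A' *ᵥ v with hw
    have f1 : w ⬝ᵥ (A *ᵥ w) = v ⬝ᵥ (A' *ᵥ v) := by
      rw [hw, mulVec_mulVec, dotl, hA't, mulVec_mulVec, ← mul_assoc, a2]
    have f2 : x ⬝ᵥ (B *ᵥ x) = v ⬝ᵥ (B' *ᵥ v) := by
      rw [hx, mulVec_mulVec, dotl, hB't, mulVec_mulVec, ← mul_assoc, b2]
    have hPx : (B * B') *ᵥ x = x := by
      rw [hx, mulVec_mulVec, commB, b2]
    have f3 : x ⬝ᵥ (A *ᵥ w) = v ⬝ᵥ (B' *ᵥ v) := by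
      have : A *ᵥ w = (B * B') *ᵥ v := by rw [hw, mulVec_mulVec, hPP]
      rw [this, ← b3, ← dotl, hPx, dotProduct_comm]
    have f3' : w ⬝ᵥ (A *ᵥ x) = x ⬝ᵥ (A *ᵥ w) := by
      conv_lhs => rw [← hAt]
      rw [← dotl, dotProduct_comm]
    have n1 : 0 ≤ (x - w) ⬝ᵥ (A *ᵥ (x - w)) := by
      have := hA.dotProduct_mulVec_nonneg (x - w); rwa [hstar] at this
    have n2 : 0 ≤ x ⬝ᵥ ((B - A) *ᵥ x) := by
      have := hle.dotProduct_mulVec_nonneg x; rwa [hstar] at this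
    have keyid : v ⬝ᵥ ((A' - B') *ᵥ v)
        = (x - w) ⬝ᵥ (A *ᵥ (x - w)) + x ⬝ᵥ ((B - A) *ᵥ x) := by
      simp only [sub_mulVec, mulVec_sub, dotProduct_sub, sub_dotProduct]
      rw [← hx, ← hw]
      linarith [f1, f2, f3, f3']
    rw [keyid]
    exact add_nonneg n1 n2
end

section
/- All eigenvalues of the normalized Laplacian N = D†ᐟ² L D†ᐟ² of a k×k matrix-weighted graph lie in the interval [0, 2]. -/
open Matrix

open scoped Classical in
/-- Positive-semidefinite square root of a matrix (zero if the matrix is not PSD). -/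
noncomputable def psqrt {ι : Type*} [Fintype ι] [DecidableEq ι]
    (A : Matrix ι ι ℝ) : Matrix ι ι ℝ :=
  if h : A.PosSemidef then
    h.1.eigenvectorUnitary.1 * diagonal ((↑) ∘ (√·) ∘ h.1.eigenvalues) *
      (star h.1.eigenvectorUnitary : Matrix ι ι ℝ)
  else 0

/-!
Write `c_e` for the signless incidence vector of an edge (both blocks equal to `φ_e`). For a
loopless graph `b_e b_eᵀ + c_e c_eᵀ` is twice the contribution of `e` to `D`, so `L` and the
signless Laplacian `Σ c_e c_eᵀ` are positive semidefinite and sum to `2D`; hence `0 ≤ L ≤ 2D` in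
the Loewner order. Conjugating by the self-adjoint `M = D†ᐟ²` gives `0 ≤ N ≤ 2 MDM`, and `MDM` is
an orthogonal projection because `D D† D = D`, so `MDM ≤ 1`. The Rayleigh quotient of an
eigenvector of `N` therefore lies in `[0, 2]`.
-/

open scoped MatrixOrder

section PenroseInverse

variable {ι : Type*} [Fintype ι]

def IsPenroseInverse (A B : Matrix ι ι ℝ) : Prop :=
  A * B * A = A ∧ B * A * B = B ∧ (A * B)ᵀ = A * B ∧ (B * A)ᵀ = B * A

theorem isPenroseInverse_pinv {A : Matrix ι ι ℝ} (h : ∃ B, IsPenroseInverse A B) :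
    IsPenroseInverse A (pinv A) := by
  unfold IsPenroseInverse at h
  rw [pinv, dif_pos h]
  exact h.choose_spec

theorem pinv_eq_zero {A : Matrix ι ι ℝ} (h : ¬ ∃ B, IsPenroseInverse A B) : pinv A = 0 := by
  unfold IsPenroseInverse at h
  rw [pinv, dif_neg h]

namespace IsPenroseInverse

variable {A B C : Matrix ι ι ℝ}

theorem transpose (h : IsPenroseInverse A B) : IsPenroseInverse Aᵀ Bᵀ := by
  obtain ⟨h1, h2, h3, h4⟩ := h
  refine ⟨?_, ?_, ?_, ?_⟩
  · rw [← transpose_mul, ← transpose_mul, ← mul_assoc, h1]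
  · rw [← transpose_mul, ← transpose_mul, ← mul_assoc, h2]
  · rw [← transpose_mul, h4, h4]
  · rw [← transpose_mul, h3, h3]

theorem unique (hB : IsPenroseInverse A B) (hC : IsPenroseInverse A C) : B = C := by
  obtain ⟨hB1, hB2, hB3, hB4⟩ := hB
  obtain ⟨hC1, hC2, hC3, hC4⟩ := hC
  have hAB : A * B = A * C :=
    calc A * B = (A * C * A * B)ᵀ := by rw [hC1, hB3]
      _ = (A * B) * (A * C) := by rw [mul_assoc (A * C), transpose_mul, hB3, hC3]
      _ = A * C := by rw [← mul_assoc, hB1]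
  have hBA : B * A = C * A :=
    calc B * A = (B * A * C * A)ᵀ := by rw [mul_assoc B A C, mul_assoc, hC1, hB4]
      _ = (C * A) * (B * A) := by rw [mul_assoc (B * A), transpose_mul, hB4, hC4]
      _ = C * A := by rw [mul_assoc, ← mul_assoc A, hB1]
  calc B = B * A * B := hB2.symm
    _ = C * A * C := by rw [hBA, mul_assoc, hAB, ← mul_assoc]
    _ = C := hC2

theorem transpose_eq (hA : Aᵀ = A) (h : IsPenroseInverse A B) : Bᵀ = B :=
  (hA ▸ h.transpose).unique h

theorem posSemidef (hA : A.PosSemidef) (h : IsPenroseInverse A B) : B.PosSemidef := by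
  have hB : Bᴴ = B := by
    rw [conjTranspose_eq_transpose_of_trivial]
    exact h.transpose_eq (by rw [← conjTranspose_eq_transpose_of_trivial]; exact hA.1)
  simpa only [hB, h.2.1] using hA.mul_mul_conjTranspose_same B

end IsPenroseInverse

end PenroseInverse

section SquareRoot

variable {ι : Type*} [Fintype ι] [DecidableEq ι]

theorem isSelfAdjoint_psqrt (A : Matrix ι ι ℝ) : IsSelfAdjoint (psqrt A) := by
  unfold psqrt
  split_ifs with hA
  · simp [IsSelfAdjoint, star_eq_conjTranspose, mul_assoc]
  · exact IsSelfAdjoint.zero _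

theorem psqrt_mul_self {A : Matrix ι ι ℝ} (hA : A.PosSemidef) : psqrt A * psqrt A = A := by
  set U : Matrix ι ι ℝ := hA.1.eigenvectorUnitary.1
  have hU : star U * U = 1 := hA.1.eigenvectorUnitary.2.1
  have hsq : diagonal (((↑) ∘ (√·) ∘ hA.1.eigenvalues) : ι → ℝ) *
      diagonal ((↑) ∘ (√·) ∘ hA.1.eigenvalues) = diagonal (RCLike.ofReal ∘ hA.1.eigenvalues) := by
    rw [diagonal_mul_diagonal]
    congr 1
    funext i
    simp [Real.mul_self_sqrt (hA.eigenvalues_nonneg i)]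
  rw [psqrt, dif_pos hA]
  conv_rhs => rw [hA.1.spectral_theorem, Unitary.conjStarAlgAut_apply, ← hsq]
  simp only [mul_assoc]
  rw [← mul_assoc (star U) U, hU, one_mul]

theorem psqrt_zero : psqrt (0 : Matrix ι ι ℝ) = 0 := by
  rw [← conjTranspose_mul_self_eq_zero, ← star_eq_conjTranspose, (isSelfAdjoint_psqrt 0).star_eq,
    psqrt_mul_self PosSemidef.zero]

theorem isStarProjection_psqrt_pinv_mul_mul {D : Matrix ι ι ℝ} (hD : D.PosSemidef) :
    IsStarProjection (psqrt (pinv D) * D * psqrt (pinv D)) := by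
  -- `pinv` is defined by choice; its junk value `0` also gives a projection.
  by_cases h : ∃ B, IsPenroseInverse D B
  · set M := psqrt (pinv D)
    have hDBD : D * pinv D * D = D := (isPenroseInverse_pinv h).1
    have hMM : M * M = pinv D := psqrt_mul_self ((isPenroseInverse_pinv h).posSemidef hD)
    refine ⟨?_, IsSelfAdjoint.conjugate_self hD.isHermitian (isSelfAdjoint_psqrt _)⟩
    calc M * D * M * (M * D * M) = M * (D * (M * M) * D) * M := by simp only [mul_assoc]
      _ = M * D * M := by rw [hMM, hDBD, mul_assoc]
  · rw [pinv_eq_zero h, psqrt_zero, zero_mul, mul_zero]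
    exact IsStarProjection.zero _

end SquareRoot

section LoewnerBounds

variable {ι : Type*} [Fintype ι] [DecidableEq ι]

theorem nonneg_psqrt_mul_mul {L : Matrix ι ι ℝ} (A : Matrix ι ι ℝ) (hL : 0 ≤ L) :
    0 ≤ psqrt A * L * psqrt A :=
  (isSelfAdjoint_psqrt _).conjugate_nonneg hL

theorem psqrt_pinv_mul_mul_le {D L : Matrix ι ι ℝ} {c : ℝ} (hD : 0 ≤ D) (hc : 0 ≤ c)
    (hLD : L ≤ c • D) : psqrt (pinv D) * L * psqrt (pinv D) ≤ c • 1 := by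
  set M := psqrt (pinv D)
  have hP : M * D * M ≤ 1 := (isStarProjection_psqrt_pinv_mul_mul hD.posSemidef).le_one
  calc M * L * M ≤ M * (c • D) * M := (isSelfAdjoint_psqrt _).conjugate_le_conjugate hLD
    _ = c • (M * D * M) := by rw [mul_smul_comm, smul_mul_assoc]
    _ ≤ c • 1 := by
      rw [le_iff, ← smul_sub]
      exact (le_iff.mp hP).smul hc

theorem mem_Icc_of_nonneg_of_le_smul_one {N : Matrix ι ι ℝ} {c μ : ℝ} {v : ι → ℝ}
    (h0 : 0 ≤ N) (hc : N ≤ c • 1) (hv : v ≠ 0) (hev : N *ᵥ v = μ • v) : μ ∈ Set.Icc 0 c := by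
  have hform : v ⬝ᵥ N *ᵥ v = μ * (v ⬝ᵥ v) := by rw [hev, dotProduct_smul, smul_eq_mul]
  have hpos : 0 < v ⬝ᵥ v := by simpa using dotProduct_star_self_pos_iff.mpr hv
  have hlow : 0 ≤ v ⬝ᵥ N *ᵥ v := by simpa using h0.posSemidef.dotProduct_mulVec_nonneg v
  have hupp : v ⬝ᵥ N *ᵥ v ≤ c * (v ⬝ᵥ v) := by
    have h := (le_iff.mp hc).dotProduct_mulVec_nonneg v
    simpa [sub_mulVec, smul_mulVec, dotProduct_smul] using h
  rw [hform] at hlow hupp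
  exact ⟨nonneg_of_mul_nonneg_left hlow hpos, le_of_mul_le_mul_right hupp hpos⟩

end LoewnerBounds

namespace MatrixWeightedGraph

variable {V K : Type*} [DecidableEq V]

def signedIncidence (φ : V × V → K → ℝ) (e : V × V) : V × K → ℝ := fun p =>
  (if p.1 = e.1 then φ e p.2 else 0) - (if p.1 = e.2 then φ e p.2 else 0)

def signlessIncidence (φ : V × V → K → ℝ) (e : V × V) : V × K → ℝ := fun p =>
  (if p.1 = e.1 then φ e p.2 else 0) + (if p.1 = e.2 then φ e p.2 else 0)

def degreeMatrix (E : Finset (V × V)) (φ : V × V → K → ℝ) : Matrix (V × K) (V × K) ℝ :=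
  of fun p q => if p.1 = q.1 then
    ∑ e ∈ E, (if e.1 = p.1 ∨ e.2 = p.1 then φ e p.2 * φ e q.2 else 0) else 0

def laplacian (E : Finset (V × V)) (φ : V × V → K → ℝ) : Matrix (V × K) (V × K) ℝ :=
  ∑ e ∈ E, vecMulVec (signedIncidence φ e) (signedIncidence φ e)

def signlessLaplacian (E : Finset (V × V)) (φ : V × V → K → ℝ) : Matrix (V × K) (V × K) ℝ :=
  ∑ e ∈ E, vecMulVec (signlessIncidence φ e) (signlessIncidence φ e)

theorem signedIncidence_mul_add_signlessIncidence_mul {φ : V × V → K → ℝ} {e : V × V}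
    (he : e.1 ≠ e.2) (p q : V × K) :
    signedIncidence φ e p * signedIncidence φ e q +
        signlessIncidence φ e p * signlessIncidence φ e q =
      2 * if p.1 = q.1 ∧ (e.1 = p.1 ∨ e.2 = p.1) then φ e p.2 * φ e q.2 else 0 := by
  unfold signedIncidence signlessIncidence
  split_ifs <;> grind

theorem laplacian_add_signlessLaplacian {E : Finset (V × V)} (hE : ∀ e ∈ E, e.1 ≠ e.2)
    (φ : V × V → K → ℝ) :
    laplacian E φ + signlessLaplacian E φ = (2 : ℝ) • degreeMatrix E φ := by
  ext p q
  simp only [laplacian, signlessLaplacian, degreeMatrix, Matrix.add_apply, Matrix.sum_apply,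
    vecMulVec_apply, Matrix.smul_apply, of_apply, ← Finset.sum_add_distrib]
  rw [Finset.sum_congr rfl fun e he => signedIncidence_mul_add_signlessIncidence_mul (hE e he) p q,
    ← Finset.mul_sum, smul_eq_mul]
  split_ifs with hpq <;> simp [hpq]

variable [Finite V] [Finite K]

theorem laplacian_nonneg (E : Finset (V × V)) (φ : V × V → K → ℝ) : 0 ≤ laplacian E φ :=
  (posSemidef_sum E fun e _ => by
    simpa using posSemidef_vecMulVec_self_star (signedIncidence φ e)).nonneg

theorem signlessLaplacian_nonneg (E : Finset (V × V)) (φ : V × V → K → ℝ) :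
    0 ≤ signlessLaplacian E φ :=
  (posSemidef_sum E fun e _ => by
    simpa using posSemidef_vecMulVec_self_star (signlessIncidence φ e)).nonneg

theorem degreeMatrix_nonneg {E : Finset (V × V)} (hE : ∀ e ∈ E, e.1 ≠ e.2)
    (φ : V × V → K → ℝ) : 0 ≤ degreeMatrix E φ := by
  have h := add_nonneg (laplacian_nonneg E φ) (signlessLaplacian_nonneg E φ)
  rw [laplacian_add_signlessLaplacian hE] at h
  simpa [smul_smul] using (h.posSemidef.smul (a := (2 : ℝ)⁻¹) (by norm_num)).nonneg

theorem laplacian_le_two_smul_degreeMatrix {E : Finset (V × V)} (hE : ∀ e ∈ E, e.1 ≠ e.2)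
    (φ : V × V → K → ℝ) : laplacian E φ ≤ (2 : ℝ) • degreeMatrix E φ := by
  rw [le_iff, ← laplacian_add_signlessLaplacian hE, add_sub_cancel_left]
  exact (signlessLaplacian_nonneg E φ).posSemidef

end MatrixWeightedGraph

open MatrixWeightedGraph

/-- All (real) eigenvalues of the normalized Laplacian `N = D†ᐟ² L D†ᐟ²` of a
`k×k` matrix-weighted graph lie in `[0, 2]`. -/
theorem stmt4 {n k : ℕ} (E : Finset (Fin n × Fin n))
    (hE : ∀ e ∈ E, e.1 ≠ e.2)
    (φ : Fin n × Fin n → (Fin k → ℝ))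
    (b : Fin n × Fin n → (Fin n × Fin k → ℝ))
    (hb : ∀ e, b e = fun p =>
      (if p.1 = e.1 then φ e p.2 else 0) - (if p.1 = e.2 then φ e p.2 else 0))
    (D : Matrix (Fin n × Fin k) (Fin n × Fin k) ℝ)
    (hD : D = Matrix.of fun p q => if p.1 = q.1 then
        ∑ e ∈ E, (if e.1 = p.1 ∨ e.2 = p.1 then φ e p.2 * φ e q.2 else 0) else 0)
    (L : Matrix (Fin n × Fin k) (Fin n × Fin k) ℝ)
    (hL : L = ∑ e ∈ E, vecMulVec (b e) (b e))
    (N : Matrix (Fin n × Fin k) (Fin n × Fin k) ℝ)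
    (hN : N = psqrt (pinv D) * L * psqrt (pinv D))
    (μ : ℝ) (v : Fin n × Fin k → ℝ) (hv : v ≠ 0) (hev : N.mulVec v = μ • v) :
    0 ≤ μ ∧ μ ≤ 2 := by
  have hL' : L = laplacian E φ := by rw [hL, funext hb]; rfl
  have hD' : D = degreeMatrix E φ := hD
  subst hN hL' hD'
  exact mem_Icc_of_nonneg_of_le_smul_one (nonneg_psqrt_mul_mul _ (laplacian_nonneg E φ))
    (psqrt_pinv_mul_mul_le (degreeMatrix_nonneg hE φ) zero_le_two
      (laplacian_le_two_smul_degreeMatrix hE φ)) hv hev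
end

section
/- Let G be an ordinary unweighted graph with minimum degree d_min, let N = D^{-1/2} L D^{-1/2} be its normalized Laplacian, fix δ ∈ (0,1), and let f₁,…,f_ℓ be orthonormal eigenvectors of N with eigenvalues at most 1-δ. Then for every vertex u, Σ_{j=1}^{ℓ} (f_j)_u² ≤ 1/(δ² d_min). -/
open Matrix

/-!
Write `x` for the `u`-th row of `1 - N`. Since `N f_j = μ_j f_j`, the coefficient of `f_j` in `x`
is `⟪f_j, x⟫ = (1 - μ_j) (f_j)_u`, of absolute value at least `δ |(f_j)_u|`. Bessel's inequality
gives `δ² Σ_j (f_j)_u² ≤ ‖x‖²`, and `x_v = A_uv / √(d_u d_v)`, so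
`‖x‖² = Σ_{v ~ u} 1 / (d_u d_v) ≤ 1 / d_min`.
-/

theorem sum_sq_dotProduct_le_of_orthonormal {ι m : Type*} [Fintype ι] [DecidableEq ι]
    [Fintype m] (f : ι → m → ℝ) (horth : ∀ a a', f a ⬝ᵥ f a' = if a = a' then 1 else 0)
    (x : m → ℝ) : ∑ j, (f j ⬝ᵥ x) ^ 2 ≤ ∑ i, x i ^ 2 := by
  have hON : Orthonormal ℝ fun j => WithLp.toLp 2 (f j) := by
    rw [orthonormal_iff_ite]
    intro a a'
    simpa [EuclideanSpace.inner_toLp_toLp, dotProduct_comm, eq_comm] using horth a' a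
  have hB := hON.sum_inner_products_le (WithLp.toLp 2 x) (s := Finset.univ)
  simp only [EuclideanSpace.real_norm_sq_eq, EuclideanSpace.inner_toLp_toLp, star_trivial,
    Real.norm_eq_abs, sq_abs] at hB
  simpa only [dotProduct_comm x] using hB

namespace SimpleGraph

variable {V : Type*} [Fintype V] [DecidableEq V] (G : SimpleGraph V) [DecidableRel G.Adj]

noncomputable def normLapMatrix : Matrix V V ℝ :=
  diagonal (fun u => 1 / Real.sqrt (G.degree u)) * G.lapMatrix ℝ *
    diagonal (fun u => 1 / Real.sqrt (G.degree u))

theorem one_sub_normLapMatrix_apply {u : V} (hu : 0 < G.degree u) (v : V) :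
    (1 - G.normLapMatrix) u v =
      G.adjMatrix ℝ u v / (Real.sqrt (G.degree u) * Real.sqrt (G.degree v)) := by
  have hsq : Real.sqrt (G.degree u) * Real.sqrt (G.degree u) = G.degree u :=
    Real.mul_self_sqrt (Nat.cast_nonneg _)
  have hsu : Real.sqrt (G.degree u) ≠ 0 := by positivity
  rw [Matrix.sub_apply, normLapMatrix, lapMatrix, degMatrix, mul_assoc, diagonal_mul, mul_diagonal]
  rcases eq_or_ne u v with rfl | huv
  · simp only [one_apply_eq, one_div, Matrix.sub_apply, diagonal_apply_eq, adjMatrix_apply,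
      G.irrefl, if_false, sub_zero, zero_div]
    field_simp
    linarith
  · by_cases h : G.Adj u v <;> simp [h, huv, one_apply_ne huv, mul_comm]

theorem sq_one_sub_normLapMatrix_apply {u : V} (hu : 0 < G.degree u) (v : V) :
    (1 - G.normLapMatrix) u v ^ 2 =
      if G.Adj u v then 1 / ((G.degree u : ℝ) * G.degree v) else 0 := by
  rw [G.one_sub_normLapMatrix_apply hu, div_pow, mul_pow, Real.sq_sqrt (Nat.cast_nonneg _),
    Real.sq_sqrt (Nat.cast_nonneg _)]
  split_ifs with h <;> simp [h]

theorem sum_sq_one_sub_normLapMatrix_apply_le {dmin : ℕ} (hdmin : 0 < dmin)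
    (hdeg : ∀ v, dmin ≤ G.degree v) (u : V) :
    ∑ v, (1 - G.normLapMatrix) u v ^ 2 ≤ 1 / (dmin : ℝ) := by
  have hu : 0 < G.degree u := hdmin.trans_le (hdeg u)
  calc ∑ v, (1 - G.normLapMatrix) u v ^ 2
      = ∑ v, if G.Adj u v then 1 / ((G.degree u : ℝ) * G.degree v) else 0 :=
        Finset.sum_congr rfl fun v _ => G.sq_one_sub_normLapMatrix_apply hu v
    _ ≤ ∑ v, if G.Adj u v then 1 / ((G.degree u : ℝ) * dmin) else 0 := by
        gcongr with v
        split_ifs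
        · gcongr
          exact_mod_cast hdeg v
        · rfl
    _ = 1 / (dmin : ℝ) := by
        rw [Finset.sum_ite, Finset.sum_const_zero, add_zero, Finset.sum_const, nsmul_eq_mul]
        rw [← G.neighborFinset_eq_filter, card_neighborFinset_eq_degree]
        have hdu : (G.degree u : ℝ) ≠ 0 := by positivity
        field_simp

end SimpleGraph

theorem stmt8_general {n : ℕ} (G : SimpleGraph (Fin n)) [DecidableRel G.Adj]
    (dmin : ℕ) (hdmin : 1 ≤ dmin) (hdeg : ∀ u, dmin ≤ G.degree u)
    (δ : ℝ) (hδ0 : 0 < δ)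
    (N : Matrix (Fin n) (Fin n) ℝ)
    (hN : N = Matrix.diagonal (fun u => 1 / Real.sqrt (G.degree u)) *
        (Matrix.diagonal (fun u => (G.degree u : ℝ)) - G.adjMatrix ℝ) *
        Matrix.diagonal (fun u => 1 / Real.sqrt (G.degree u)))
    {ℓ : ℕ} (f : Fin ℓ → (Fin n → ℝ)) (μ : Fin ℓ → ℝ)
    (horth : ∀ a a', f a ⬝ᵥ f a' = if a = a' then 1 else 0)
    (heig : ∀ a, N.mulVec (f a) = μ a • f a)
    (hμ : ∀ a, μ a ≤ 1 - δ) (u : Fin n) :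
    ∑ j, (f j u) ^ 2 ≤ 1 / (δ ^ 2 * dmin) := by
  change N = G.normLapMatrix at hN
  subst hN
  set x := (1 - G.normLapMatrix) u
  have hcoef : ∀ j, f j ⬝ᵥ x = (1 - μ j) * f j u := fun j => by
    rw [dotProduct_comm, ← mulVec, sub_mulVec, one_mulVec, heig j]
    simp [sub_mul]
  have hsq : ∀ j, δ ^ 2 * f j u ^ 2 ≤ (f j ⬝ᵥ x) ^ 2 := fun j => by
    rw [hcoef j, mul_pow]
    gcongr
    linarith [hμ j]
  have hbound : δ ^ 2 * ∑ j, f j u ^ 2 ≤ 1 / (dmin : ℝ) :=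
    calc δ ^ 2 * ∑ j, f j u ^ 2 ≤ ∑ j, (f j ⬝ᵥ x) ^ 2 := by
          rw [Finset.mul_sum]; exact Finset.sum_le_sum fun j _ => hsq j
      _ ≤ ∑ v, x v ^ 2 := sum_sq_dotProduct_le_of_orthonormal f horth x
      _ ≤ 1 / (dmin : ℝ) := G.sum_sq_one_sub_normLapMatrix_apply_le hdmin hdeg u
  rw [mul_comm, ← div_div, le_div_iff₀ (by positivity)]
  linarith

/-- For an unweighted graph with minimum degree `d_min`, any orthonormal family of
eigenvectors of the normalized Laplacian with eigenvalues at most `1 - δ` satisfies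
`Σⱼ (f_j)_u² ≤ 1/(δ² d_min)` at every vertex `u`. -/
theorem stmt8 {n : ℕ} (G : SimpleGraph (Fin n)) [DecidableRel G.Adj]
    (dmin : ℕ) (hdmin : 1 ≤ dmin) (hdeg : ∀ u, dmin ≤ G.degree u)
    (δ : ℝ) (hδ0 : 0 < δ) (hδ1 : δ < 1)
    (N : Matrix (Fin n) (Fin n) ℝ)
    (hN : N = Matrix.diagonal (fun u => 1 / Real.sqrt (G.degree u)) *
        (Matrix.diagonal (fun u => (G.degree u : ℝ)) - G.adjMatrix ℝ) *
        Matrix.diagonal (fun u => 1 / Real.sqrt (G.degree u)))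
    {ℓ : ℕ} (f : Fin ℓ → (Fin n → ℝ)) (μ : Fin ℓ → ℝ)
    (horth : ∀ a a', f a ⬝ᵥ f a' = if a = a' then 1 else 0)
    (heig : ∀ a, N.mulVec (f a) = μ a • f a)
    (hμ : ∀ a, μ a ≤ 1 - δ) (u : Fin n) :
    ∑ j, (f j u) ^ 2 ≤ 1 / (δ ^ 2 * dmin) :=
  stmt8_general G dmin hdmin hdeg δ hδ0 N hN f μ horth heig hμ u
end

section
/- For any unweighted graph G with degree matrix D and adjacency matrix A such that all degrees are positive, the Laplacian of the squared graph L_{G²} := D - A D^{-1} A satisfies L_{G²} ⪯ 2·L_G, where L_G = D - A. -/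
open Matrix

/-- The Laplacian of the squared graph satisfies `L_{G²} ⪯ 2·L_G`. -/
theorem stmt10 {n : ℕ} (G : SimpleGraph (Fin n)) [DecidableRel G.Adj]
    (hdeg : ∀ u, 0 < G.degree u)
    (D A LG LG2 : Matrix (Fin n) (Fin n) ℝ)
    (hD : D = Matrix.diagonal fun u => (G.degree u : ℝ))
    (hA : A = G.adjMatrix ℝ)
    (hLG : LG = D - A)
    (hLG2 : LG2 = D - A * Matrix.diagonal (fun u => 1 / (G.degree u : ℝ)) * A) :
    ((2 : ℝ) • LG - LG2).PosSemidef := by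
  have hd : ∀ u, ((G.degree u : ℝ)) ≠ 0 := fun u => Nat.cast_ne_zero.mpr (hdeg u).ne'
  set M : Matrix (Fin n) (Fin n) ℝ := Matrix.diagonal (fun u => 1 / (G.degree u : ℝ)) with hM
  set C : Matrix (Fin n) (Fin n) ℝ :=
    Matrix.diagonal (fun u => 1 / Real.sqrt (G.degree u)) with hC
  have key : (2 : ℝ) • LG - LG2 = (C * LG)ᴴ * (C * LG) := by
    have hCC : C * C = M := by
      have h1 : ∀ u : Fin n, 1 / Real.sqrt (G.degree u) * (1 / Real.sqrt (G.degree u))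
          = 1 / (G.degree u : ℝ) := fun u => by
        rw [div_mul_div_comm, one_mul, Real.mul_self_sqrt (Nat.cast_nonneg _)]
      rw [hC, hM, Matrix.diagonal_mul_diagonal]
      simp only [h1]
    have hAsymm : Aᴴ = A := by
      rw [hA]
      ext i j
      simp [Matrix.conjTranspose_apply, SimpleGraph.adjMatrix_apply, SimpleGraph.adj_comm]
    have hDsymm : Dᴴ = D := by
      rw [hD]
      simp [Matrix.diagonal_conjTranspose]
    have hLGsymm : LGᴴ = LG := by
      rw [hLG, Matrix.conjTranspose_sub, hAsymm, hDsymm]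
    have hCsymm : Cᴴ = C := by
      rw [hC]
      simp [Matrix.diagonal_conjTranspose]
    have hDM : D * M = 1 := by
      rw [hD, hM, Matrix.diagonal_mul_diagonal]
      rw [show (fun u => (G.degree u : ℝ) * (1 / (G.degree u : ℝ))) = fun _ => 1 from
        funext fun u => mul_one_div_cancel (hd u), Matrix.diagonal_one]
    have hMD : M * D = 1 := by
      rw [hD, hM, Matrix.diagonal_mul_diagonal]
      rw [show (fun u => (1 / (G.degree u : ℝ)) * (G.degree u : ℝ)) = fun _ => 1 from
        funext fun u => one_div_mul_cancel (hd u), Matrix.diagonal_one]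
    rw [Matrix.conjTranspose_mul, hLGsymm, hCsymm]
    have : LG * (C * (C * LG)) = LG * M * LG := by
      rw [← Matrix.mul_assoc, ← Matrix.mul_assoc, Matrix.mul_assoc LG C C, hCC]
    rw [Matrix.mul_assoc, this, hLG, hLG2]
    have expand : (D - A) * M * (D - A)
        = D * M * D - D * M * A - A * (M * D) + A * M * A := by
      noncomm_ring
    rw [expand, hDM, hMD, Matrix.one_mul, Matrix.one_mul, Matrix.mul_one]
    rw [two_smul]
    abel
  rw [key]
  exact Matrix.posSemidef_conjTranspose_mul_self _
end

section
/- For any unweighted graph G on n vertices with all degrees positive, Σ_{u∈V} SC_N(L_G, V∖{u}) = L_{G²} + (n-2)·L_G, where SC_N(L_G, V∖{u}) = L_G - (1/L_{uu}) L_G(:,u) L_G(:,u)ᵀ is the Schur complement of L_G eliminating vertex u (padded back to n×n), and L_{G²} = D - A D^{-1} A. -/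
/-!
Each one-vertex Schur complement is `L` minus the rank-one matrix `L(:,u) L(:,u)ᵀ / L_uu`, and
these rank-one terms sum to `L D⁻¹ Lᵀ`. For the Laplacian `L = D - A` (symmetric, diagonal `D`)
this is `(D - A) D⁻¹ (D - A) = D - 2A + A D⁻¹ A`, so the sum is
`n L - (D - 2A + A D⁻¹ A) = (D - A D⁻¹ A) + (n - 2) L`.
-/

open Matrix

theorem Matrix.sum_smul_vecMulVec_col {ι R : Type*} [Fintype ι] [DecidableEq ι] [CommSemiring R]
    (M N : Matrix ι ι R) (w : ι → R) :
    ∑ u, w u • vecMulVec (fun i => M i u) (fun i => N i u) = M * diagonal w * Nᵀ := by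
  ext i j
  rw [mul_apply, Matrix.sum_apply]
  simp only [smul_apply, vecMulVec_apply, mul_diagonal, transpose_apply, smul_eq_mul]
  exact Finset.sum_congr rfl fun u _ => by ring

theorem Matrix.sum_sub_smul_vecMulVec_col {ι K : Type*} [Fintype ι] [DecidableEq ι] [Field K]
    (M : Matrix ι ι K) :
    ∑ u, (M - (1 / M u u) • vecMulVec (fun i => M i u) (fun i => M i u))
      = Fintype.card ι • M - M * diagonal (fun u => 1 / M u u) * Mᵀ := by
  rw [Finset.sum_sub_distrib, Finset.sum_const, Finset.card_univ, sum_smul_vecMulVec_col]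

theorem Matrix.diagonal_sub_mul_diagonal_inv_mul_diagonal_sub {ι K : Type*} [Fintype ι]
    [DecidableEq ι] [DivisionRing K] (d : ι → K) (hd : ∀ i, d i ≠ 0) (A B : Matrix ι ι K) :
    (diagonal d - A) * diagonal (fun i => 1 / d i) * (diagonal d - B)
      = diagonal d - A - B + A * diagonal (fun i => 1 / d i) * B := by
  have hright : diagonal d * diagonal (fun i => 1 / d i) = 1 := by
    rw [diagonal_mul_diagonal, ← diagonal_one]
    exact congrArg diagonal (funext fun i => mul_one_div_cancel (hd i))
  have hleft : diagonal (fun i => 1 / d i) * diagonal d = 1 := by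
    rw [diagonal_mul_diagonal, ← diagonal_one]
    exact congrArg diagonal (funext fun i => one_div_mul_cancel (hd i))
  rw [sub_mul, sub_mul, mul_sub, mul_sub, hright, one_mul, one_mul, mul_assoc A, hleft, mul_one]
  abel

/-- Summing the one-vertex Schur complements of the Laplacian over all vertices gives
`L_{G²} + (n-2)·L_G`. -/
theorem stmt11 {n : ℕ} (G : SimpleGraph (Fin n)) [DecidableRel G.Adj]
    (hdeg : ∀ u, 0 < G.degree u)
    (D A LG LG2 : Matrix (Fin n) (Fin n) ℝ)
    (hD : D = Matrix.diagonal fun u => (G.degree u : ℝ))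
    (hA : A = G.adjMatrix ℝ)
    (hLG : LG = D - A)
    (hLG2 : LG2 = D - A * Matrix.diagonal (fun u => 1 / (G.degree u : ℝ)) * A) :
    ∑ u : Fin n, (LG - (1 / LG u u) • vecMulVec (fun i => LG i u) (fun i => LG i u))
      = LG2 + ((n : ℝ) - 2) • LG := by
  subst hD hA hLG hLG2
  have hdeg_ne : ∀ u, (G.degree u : ℝ) ≠ 0 := fun u => by exact_mod_cast (hdeg u).ne'
  have hdiag : ∀ u, (diagonal (fun u => (G.degree u : ℝ)) - G.adjMatrix ℝ) u u = G.degree u := by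
    simp
  have hsymm : (diagonal (fun u => (G.degree u : ℝ)) - G.adjMatrix ℝ).IsSymm :=
    (isSymm_diagonal _).sub G.isSymm_adjMatrix
  rw [sum_sub_smul_vecMulVec_col, hsymm.eq, Fintype.card_fin]
  simp only [hdiag]
  rw [diagonal_sub_mul_diagonal_inv_mul_diagonal_sub _ hdeg_ne]
  module
end

section
/- Suppose an n×n positive semidefinite matrix M factors as M = [[𝓛_FF, 0],[𝓛_CF, I_CC]] · diag(𝓓, S) · [[𝓛_FF, 0],[𝓛_CF, I_CC]]ᵀ for a bipartition (F, C) of [n], where 𝓛_FF is invertible, 𝓓 is diagonal with nonnegative entries, and S is positive semidefinite. Let f₁,…,f_z be a basis of the null space of M, and let Π⊥ be the orthogonal projection onto the complement of the span of (f₁)_C,…,(f_z)_C. Then S† = Π⊥ (M†)_{CC} Π⊥, where (M†)_{CC} is M† restricted to rows and columns in C. -/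
/-!
Write `M = L D Lᵀ` with `L = [[L_FF, 0], [L_CF, I]]` and `D = diag(𝓓, S)`. For the explicit
`W = [-(L_FF⁻¹)ᵀ L_CFᵀ; I]` one has `Lᵀ W = [0; I]`, hence `M W = [0; S]`. Two facts follow.
Transposing, `Sᵀ (x)_C = Wᵀ M x = 0` for every null vector `x` of `M`, so `S` vanishes on the span
of the `(fᵢ)_C` and `Π⊥ S = S`. And `M† M W = W - R` with the columns of `R` in the null space of
`M`, i.e. in the span of the `fᵢ`; reading off the `C` rows gives `(M†)_{CC} S = I - (R)_C` with
`Π⊥ (R)_C = 0`, so `Π⊥ (M†)_{CC} S = Π⊥`. These identities are exactly the four Penrose conditions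
for `Π⊥ (M†)_{CC} Π⊥` as a pseudoinverse of `S`.
-/

open Matrix Submodule

section MoorePenrose

variable {R : Type*} [CommRing R] {m n : Type*} [Fintype m] [Fintype n]

def IsMoorePenrose (A : Matrix m n R) (B : Matrix n m R) : Prop :=
  A * B * A = A ∧ B * A * B = B ∧ (A * B)ᵀ = A * B ∧ (B * A)ᵀ = B * A

namespace IsMoorePenrose

variable {A : Matrix m n R} {B B' : Matrix n m R}

theorem unique (h : IsMoorePenrose A B) (h' : IsMoorePenrose A B') : B = B' := by
  obtain ⟨h1, h2, h3, h4⟩ := h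
  obtain ⟨h1', h2', h3', h4'⟩ := h'
  have hAB : A * B = A * B' :=
    calc A * B = (A * B' * (A * B))ᵀ := by rw [← Matrix.mul_assoc, h1', h3]
      _ = (A * B)ᵀ * (A * B')ᵀ := transpose_mul _ _
      _ = A * B' := by rw [h3, h3', ← Matrix.mul_assoc, h1]
  have hBA : B * A = B' * A :=
    calc B * A = (B * A * (B' * A))ᵀ := by
          rw [Matrix.mul_assoc B A, ← Matrix.mul_assoc A, h1', h4]
      _ = (B' * A)ᵀ * (B * A)ᵀ := transpose_mul _ _
      _ = B' * A := by rw [h4', h4, Matrix.mul_assoc B', ← Matrix.mul_assoc A, h1]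
  calc B = B * A * B := h2.symm
    _ = B' * A * B' := by rw [hBA, Matrix.mul_assoc, hAB, ← Matrix.mul_assoc]
    _ = B' := h2'

theorem transpose (h : IsMoorePenrose A B) : IsMoorePenrose Aᵀ Bᵀ := by
  obtain ⟨h1, h2, h3, h4⟩ := h
  refine ⟨?_, ?_, ?_, ?_⟩
  · rw [← transpose_mul, ← transpose_mul, ← Matrix.mul_assoc, h1]
  · rw [← transpose_mul, ← transpose_mul, ← Matrix.mul_assoc, h2]
  · rw [← transpose_mul, transpose_transpose, h4]
  · rw [← transpose_mul, transpose_transpose, h3]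

theorem conj [DecidableEq n] {A B : Matrix n n R} (h : IsMoorePenrose A B) {U : Matrix m n R}
    (hU : Uᵀ * U = 1) : IsMoorePenrose (U * A * Uᵀ) (U * B * Uᵀ) := by
  have hmul : ∀ X Y : Matrix n n R, U * X * Uᵀ * (U * Y * Uᵀ) = U * (X * Y) * Uᵀ := by
    intro X Y
    rw [Matrix.mul_assoc (U * X), ← Matrix.mul_assoc Uᵀ, ← Matrix.mul_assoc Uᵀ, hU,
      Matrix.one_mul]
    simp only [Matrix.mul_assoc]
  have htr : ∀ X : Matrix n n R, (U * X * Uᵀ)ᵀ = U * Xᵀ * Uᵀ := by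
    intro X
    rw [transpose_mul, transpose_mul, transpose_transpose, Matrix.mul_assoc]
  obtain ⟨h1, h2, h3, h4⟩ := h
  exact ⟨by rw [hmul, hmul, h1], by rw [hmul, hmul, h2], by rw [hmul, htr, h3],
    by rw [hmul, htr, h4]⟩

end IsMoorePenrose

theorem isMoorePenrose_mul_mul_of_mul_mul_eq {S N P : Matrix n n R} (hS : Sᵀ = S) (hN : Nᵀ = N)
    (hP : Pᵀ = P) (hPP : IsIdempotentElem P) (hPS : P * S = S) (hPNS : P * N * S = P) :
    IsMoorePenrose S (P * N * P) := by
  have hSP : S * P = S := by simpa only [transpose_mul, hS, hP] using congrArg transpose hPS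
  have hSNP : S * N * P = P := by
    simpa only [transpose_mul, hS, hN, hP, mul_assoc] using congrArg transpose hPNS
  have hleft : S * (P * N * P) = P := by rw [← mul_assoc, ← mul_assoc, hSP, hSNP]
  have hright : P * N * P * S = P := by rw [mul_assoc, hPS, hPNS]
  refine ⟨?_, ?_, ?_, ?_⟩
  · rw [hleft, hPS]
  · rw [hright, ← mul_assoc, ← mul_assoc, hPP.eq]
  · rw [hleft, hP]
  · rw [hright, hP]

end MoorePenrose

theorem isMoorePenrose_diagonal {K n : Type*} [Field K] [Fintype n] [DecidableEq n]
    (d : n → K) : IsMoorePenrose (diagonal d) (diagonal d⁻¹) := by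
  simp only [IsMoorePenrose, diagonal_mul_diagonal, diagonal_transpose, and_true]
  constructor <;> congr 1 <;> funext i
  · exact mul_inv_mul_cancel (d i)
  · simpa using mul_inv_mul_cancel (d i)⁻¹

section Pinv

variable {n : Type*} [Fintype n]

theorem IsMoorePenrose.pinv_eq {A B : Matrix n n ℝ} (h : IsMoorePenrose A B) : pinv A = B := by
  rw [pinv, dif_pos ⟨B, h⟩]
  exact IsMoorePenrose.unique (Exists.choose_spec _) h

variable [DecidableEq n] {A : Matrix n n ℝ}

theorem exists_isMoorePenrose_of_isHermitian (hA : A.IsHermitian) : ∃ B, IsMoorePenrose A B := by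
  set U : Matrix n n ℝ := ↑hA.eigenvectorUnitary
  have hU : Uᵀ * U = 1 := by
    simpa [star_eq_conjTranspose] using (mem_unitaryGroup_iff').mp hA.eigenvectorUnitary.2
  have hA' : A = U * diagonal hA.eigenvalues * Uᵀ := by
    simpa [star_eq_conjTranspose] using hA.spectral_theorem
  exact ⟨_, hA' ▸ (isMoorePenrose_diagonal _).conj hU⟩

theorem isMoorePenrose_pinv_of_isHermitian (hA : A.IsHermitian) : IsMoorePenrose A (pinv A) := by
  obtain ⟨B, hB⟩ := exists_isMoorePenrose_of_isHermitian hA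
  rwa [hB.pinv_eq]

theorem transpose_pinv_of_isHermitian (hA : A.IsHermitian) : (pinv A)ᵀ = pinv A := by
  have h := (isMoorePenrose_pinv_of_isHermitian hA).transpose
  rw [(isHermitian_iff_isSymm.1 hA).eq] at h
  exact h.pinv_eq.symm

end Pinv

section ColSpace

variable {m k : Type*} [Fintype m] [Fintype k] (G : Matrix m k ℝ)

theorem mul_pinv_gram_mul_gram [DecidableEq k] : G * pinv (Gᵀ * G) * (Gᵀ * G) = G := by
  have hK : (Gᵀ * G).IsHermitian := by
    simpa using posSemidef_conjTranspose_mul_self G |>.isHermitian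
  set H := pinv (Gᵀ * G)
  have hKHK : Gᵀ * G * H * (Gᵀ * G) = Gᵀ * G := (isMoorePenrose_pinv_of_isHermitian hK).1
  have hHt : Hᵀ = H := transpose_pinv_of_isHermitian hK
  set Y := G * H * (Gᵀ * G) - G
  have hGY : Gᵀ * Y = 0 := by
    have hGGHK : Gᵀ * (G * H * (Gᵀ * G)) = Gᵀ * G := by
      simpa only [Matrix.mul_assoc] using hKHK
    rw [Matrix.mul_sub, hGGHK, sub_self]
  have hYY : Yᵀ * Y = 0 := by
    have hYt : Yᵀ = (Gᵀ * G * H - 1) * Gᵀ := by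
      simp only [Y, transpose_sub, transpose_mul, transpose_transpose, hHt, Matrix.sub_mul,
        Matrix.one_mul, Matrix.mul_assoc]
    rw [hYt, Matrix.mul_assoc, hGY, Matrix.mul_zero]
  have hY : Y = 0 := conjTranspose_mul_self_eq_zero.mp (by simpa using hYY)
  exact sub_eq_zero.mp hY

variable [DecidableEq m]

noncomputable def projColSpaceCompl : Matrix m m ℝ := 1 - G * pinv (Gᵀ * G) * Gᵀ

theorem projColSpaceCompl_mul_of_transpose_mul_eq_zero {p : Type*} {S : Matrix m p ℝ}
    (h : Gᵀ * S = 0) : projColSpaceCompl G * S = S := by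
  rw [projColSpaceCompl, Matrix.sub_mul, Matrix.one_mul, Matrix.mul_assoc, h, Matrix.mul_zero,
    sub_zero]

variable [DecidableEq k]

theorem transpose_projColSpaceCompl : (projColSpaceCompl G)ᵀ = projColSpaceCompl G := by
  have hK : (Gᵀ * G).IsHermitian := by
    simpa using posSemidef_conjTranspose_mul_self G |>.isHermitian
  simp only [projColSpaceCompl, transpose_sub, transpose_one, transpose_mul, transpose_transpose,
    transpose_pinv_of_isHermitian hK, Matrix.mul_assoc]

theorem projColSpaceCompl_mul_eq_zero : projColSpaceCompl G * G = 0 := by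
  rw [projColSpaceCompl, Matrix.sub_mul, Matrix.one_mul, Matrix.mul_assoc _ Gᵀ,
    mul_pinv_gram_mul_gram, sub_self]

theorem isIdempotentElem_projColSpaceCompl : IsIdempotentElem (projColSpaceCompl G) := by
  unfold IsIdempotentElem
  nth_rw 2 [projColSpaceCompl]
  rw [Matrix.mul_sub, Matrix.mul_one, ← Matrix.mul_assoc, ← Matrix.mul_assoc,
    projColSpaceCompl_mul_eq_zero, Matrix.zero_mul, Matrix.zero_mul, sub_zero]

end ColSpace

section Blocks

variable {R : Type*} [CommRing R] {m n k : Type*} [Fintype m] [Fintype n]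

theorem transpose_mul_toRows₂_eq_zero {M : Matrix (m ⊕ n) (m ⊕ n) R} (hM : Mᵀ = M)
    {W : Matrix (m ⊕ n) n R} {S : Matrix n n R} (hMW : M * W = fromRows 0 S)
    {X : Matrix (m ⊕ n) k R} (hX : M * X = 0) : Sᵀ * X.toRows₂ = 0 := by
  calc Sᵀ * X.toRows₂ = (fromRows (0 : Matrix m n R) S)ᵀ * X := by
        ext i j
        simp [mul_apply, Fintype.sum_sum_type]
    _ = Wᵀ * (M * X) := by rw [← hMW, transpose_mul, hM, Matrix.mul_assoc]
    _ = 0 := by rw [hX, Matrix.mul_zero]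

variable [DecidableEq m] [DecidableEq n]

theorem fromBlocks_mul_fromBlocks_mul_transpose_mul_fromRows {A : Matrix m m R}
    (hA : IsUnit A.det) (B : Matrix n m R) (D : Matrix m m R) (S : Matrix n n R) :
    fromBlocks A 0 B 1 * fromBlocks D 0 0 S * (fromBlocks A 0 B 1)ᵀ *
      fromRows (-((A⁻¹)ᵀ * Bᵀ)) (1 : Matrix n n R) = fromRows 0 S := by
  have hLtW : (fromBlocks A 0 B 1)ᵀ * fromRows (-((A⁻¹)ᵀ * Bᵀ)) (1 : Matrix n n R) =
      fromRows 0 (1 : Matrix n n R) := by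
    have hAAinv : Aᵀ * (A⁻¹)ᵀ = 1 := by
      rw [← transpose_mul, nonsing_inv_mul A hA, transpose_one]
    rw [fromBlocks_transpose, fromBlocks_mul_fromRows, Matrix.mul_neg, ← Matrix.mul_assoc,
      hAAinv]
    simp
  rw [Matrix.mul_assoc, hLtW, Matrix.mul_assoc, fromBlocks_mul_fromRows, fromBlocks_mul_fromRows]
  simp

end Blocks

theorem exists_eq_transpose_of_mul_of_mul_eq_zero {R ι l m n : Type*} [CommRing R] [Fintype ι]
    [Fintype m] {M : Matrix l m R} {f : ι → m → R}
    (hspan : ∀ x, M *ᵥ x = 0 → x ∈ span R (Set.range f)) {X : Matrix m n R} (hX : M * X = 0) :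
    ∃ Y : Matrix ι n R, X = (of f)ᵀ * Y := by
  have hcol : ∀ j, ∃ c : ι → R, ∑ i, c i • f i = Xᵀ j := fun j =>
    (mem_span_range_iff_exists_fun R).mp <| hspan _ <| by
      ext p
      simpa [mulVec, dotProduct, mul_apply] using congrFun (congrFun hX p) j
  choose c hc using hcol
  refine ⟨of fun i j => c j i, ?_⟩
  ext p j
  rw [← transpose_apply X, ← hc j]
  simp [mul_apply, mul_comm]

theorem exists_submatrix_pinv_mul_eq {m n : Type*} [Fintype m] [Fintype n] [DecidableEq m]
    [DecidableEq n] {M : Matrix (m ⊕ n) (m ⊕ n) ℝ} (hM : M.IsHermitian) {W : Matrix (m ⊕ n) n ℝ}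
    (hW : W.toRows₂ = 1) {S : Matrix n n ℝ} (hMW : M * W = fromRows 0 S) :
    ∃ X : Matrix (m ⊕ n) n ℝ, M * X = 0 ∧
      (pinv M).submatrix Sum.inr Sum.inr * S = 1 - X.toRows₂ := by
  have hMNM : M * pinv M * M = M := (isMoorePenrose_pinv_of_isHermitian hM).1
  refine ⟨W - pinv M * (M * W), ?_, ?_⟩
  · rw [Matrix.mul_sub, ← Matrix.mul_assoc, ← Matrix.mul_assoc, hMNM, sub_self]
  · have hrows : (pinv M).submatrix Sum.inr Sum.inr * S =
        (pinv M * fromRows (0 : Matrix m n ℝ) S).toRows₂ := by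
      ext i j
      simp [toRows₂, mul_apply, Fintype.sum_sum_type]
    rw [hrows, ← hMW, ← hW]
    ext i j
    simp [toRows₂]

theorem stmt13_general {F C : Type*} [Fintype F] [Fintype C] [DecidableEq F] [DecidableEq C]
    (M : Matrix (F ⊕ C) (F ⊕ C) ℝ) (hM : M.PosSemidef)
    (LFF : Matrix F F ℝ) (LCF : Matrix C F ℝ) (d : F → ℝ) (S : Matrix C C ℝ)
    (hLFF : IsUnit LFF.det) (hS : S.PosSemidef)
    (hfac : M = Matrix.fromBlocks LFF 0 LCF 1 *
        Matrix.fromBlocks (Matrix.diagonal d) 0 0 S *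
        (Matrix.fromBlocks LFF 0 LCF 1)ᵀ)
    {z : ℕ} (f : Fin z → (F ⊕ C → ℝ))
    (hker : ∀ i, M.mulVec (f i) = 0)
    (hspan : ∀ x, M.mulVec x = 0 → x ∈ Submodule.span ℝ (Set.range f))
    (G : Matrix C (Fin z) ℝ) (hG : G = Matrix.of fun c i => f i (Sum.inr c))
    (Pperp : Matrix C C ℝ) (hP : Pperp = 1 - G * pinv (Gᵀ * G) * Gᵀ) :
    pinv S = Pperp * ((pinv M).submatrix Sum.inr Sum.inr) * Pperp := by
  replace hG : G = ((of f)ᵀ).toRows₂ := hG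
  change Pperp = projColSpaceCompl G at hP
  subst hP
  have hMt : Mᵀ = M := (isHermitian_iff_isSymm.1 hM.isHermitian).eq
  have hSt : Sᵀ = S := (isHermitian_iff_isSymm.1 hS.isHermitian).eq
  have hMW := fromBlocks_mul_fromBlocks_mul_transpose_mul_fromRows hLFF LCF (diagonal d) S
  rw [← hfac] at hMW
  have hMf : M * (of f)ᵀ = 0 := by
    ext p i
    simpa [mulVec, dotProduct, mul_apply] using congrFun (hker i) p
  have hGS : Gᵀ * S = 0 := by
    simpa [hG, transpose_mul] using congrArg transpose (transpose_mul_toRows₂_eq_zero hMt hMW hMf)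
  obtain ⟨X, hMX, hNS⟩ := exists_submatrix_pinv_mul_eq hM.isHermitian (toRows₂_fromRows _ _) hMW
  obtain ⟨Y, rfl⟩ := exists_eq_transpose_of_mul_of_mul_eq_zero hspan hMX
  have hXG : ((of f)ᵀ * Y).toRows₂ = G * Y := by rw [hG]; rfl
  have hPNS : projColSpaceCompl G * (pinv M).submatrix Sum.inr Sum.inr * S =
      projColSpaceCompl G := by
    rw [Matrix.mul_assoc, hNS, hXG, Matrix.mul_sub, Matrix.mul_one, ← Matrix.mul_assoc,
      projColSpaceCompl_mul_eq_zero, Matrix.zero_mul, sub_zero]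
  exact (isMoorePenrose_mul_mul_of_mul_mul_eq hSt
    (by rw [transpose_submatrix, transpose_pinv_of_isHermitian hM.isHermitian])
    (transpose_projColSpaceCompl G) (isIdempotentElem_projColSpaceCompl G)
    (projColSpaceCompl_mul_of_transpose_mul_eq_zero G hGS) hPNS).pinv_eq

/-- If a PSD matrix `M` factors as a block lower-triangular congruence of
`diag(𝓓, S)`, and `f₁,…,f_z` is a basis of the null space of `M`, then
`S† = Π⊥ (M†)_{CC} Π⊥`, where `Π⊥` is the orthogonal projection onto the complement
of the span of the restrictions `(fᵢ)_C` (expressed as the matrix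
`I - G (GᵀG)† Gᵀ` where `G` has columns `(fᵢ)_C`). -/
theorem stmt13 {F C : Type*} [Fintype F] [Fintype C] [DecidableEq F] [DecidableEq C]
    (M : Matrix (F ⊕ C) (F ⊕ C) ℝ) (hM : M.PosSemidef)
    (LFF : Matrix F F ℝ) (LCF : Matrix C F ℝ) (d : F → ℝ) (S : Matrix C C ℝ)
    (hLFF : IsUnit LFF.det) (hd : ∀ i, 0 ≤ d i) (hS : S.PosSemidef)
    (hfac : M = Matrix.fromBlocks LFF 0 LCF 1 *
        Matrix.fromBlocks (Matrix.diagonal d) 0 0 S *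
        (Matrix.fromBlocks LFF 0 LCF 1)ᵀ)
    {z : ℕ} (f : Fin z → (F ⊕ C → ℝ))
    (hker : ∀ i, M.mulVec (f i) = 0)
    (hindep : LinearIndependent ℝ f)
    (hspan : ∀ x, M.mulVec x = 0 → x ∈ Submodule.span ℝ (Set.range f))
    (G : Matrix C (Fin z) ℝ) (hG : G = Matrix.of fun c i => f i (Sum.inr c))
    (Pperp : Matrix C C ℝ) (hP : Pperp = 1 - G * pinv (Gᵀ * G) * Gᵀ) :
    pinv S = Pperp * ((pinv M).submatrix Sum.inr Sum.inr) * Pperp :=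
  stmt13_general M hM LFF LCF d S hLFF hS hfac f hker hspan G hG Pperp hP
end

section
/- Consider the n-vertex block cycle graph with blocks S₀,…,S_{ℓ-1} of size s each (ℓ = n^{4/5}, s = n^{1/5}), where each block is a clique with edge weights n^{2/5}, consecutive blocks are joined by complete bipartite graphs with edge weights n^{2/5}, and a crossing edge e* of weight 1 joins a vertex s ∈ S_i to a vertex t ∈ S_j with min{|i-j|, ℓ-|i-j|} ≥ c·ℓ for a constant c > 0. Then the effective resistance of e* is Ω(1); concretely, there exists a vertex potential vector x ∈ ℝⁿ with (x_s - x_t)² ≥ c²/4 and total energy Σ_{e=(u,v)} w_e (x_u - x_v)² = O(1), so r_{e*} = Ω(1). -/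
open Matrix

lemma pinv_spec {ι : Type*} [Fintype ι] {A : Matrix ι ι ℝ}
    (h : ∃ B : Matrix ι ι ℝ,
      A * B * A = A ∧ B * A * B = B ∧ (A * B)ᵀ = A * B ∧ (B * A)ᵀ = B * A) :
    A * pinv A * A = A ∧ pinv A * A * pinv A = pinv A ∧ (A * pinv A)ᵀ = A * pinv A ∧
      (pinv A * A)ᵀ = pinv A * A := by
  classical
  unfold pinv
  rw [dif_pos h]
  exact h.choose_spec

lemma penrose_exists {ι : Type*} [Fintype ι] [DecidableEq ι] {A : Matrix ι ι ℝ}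
    (hA : A.IsHermitian) :
    ∃ B : Matrix ι ι ℝ,
      A * B * A = A ∧ B * A * B = B ∧ (A * B)ᵀ = A * B ∧ (B * A)ᵀ = B * A := by
  classical
  set U : Matrix ι ι ℝ := (hA.eigenvectorUnitary : Matrix ι ι ℝ) with hU
  have hUU : star U * U = 1 := Unitary.coe_star_mul_self hA.eigenvectorUnitary
  have hUU' : U * star U = 1 := Unitary.coe_mul_star_self hA.eigenvectorUnitary
  set d : ι → ℝ := hA.eigenvalues with hd
  have hAeq : A = U * diagonal d * star U := by
    simpa using hA.spectral_theorem
  set D : Matrix ι ι ℝ := diagonal d with hD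
  set D' : Matrix ι ι ℝ := diagonal (fun i => if d i = 0 then 0 else (d i)⁻¹) with hD'
  have key : ∀ M N : Matrix ι ι ℝ, (U * M * star U) * (U * N * star U) = U * (M * N) * star U := by
    intro M N
    calc (U * M * star U) * (U * N * star U) = U * M * (star U * U) * N * star U := by
          noncomm_ring
      _ = U * (M * N) * star U := by rw [hUU]; noncomm_ring
  have hDD : D * D' * D = D := by
    rw [hD, hD', diagonal_mul_diagonal, diagonal_mul_diagonal]
    refine congrArg diagonal (funext fun i => ?_)
    by_cases h : d i = 0
    · simp [Pi.mul_apply, h]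
    · field_simp [Pi.mul_apply, h]; simp [h]
  have hD'D : D' * D * D' = D' := by
    rw [hD, hD', diagonal_mul_diagonal, diagonal_mul_diagonal]
    refine congrArg diagonal (funext fun i => ?_)
    by_cases h : d i = 0
    · simp [Pi.mul_apply, h]
    · field_simp [Pi.mul_apply, h]; simp [h]
  have hsymm : ∀ e : ι → ℝ, (U * diagonal e * star U)ᵀ = U * diagonal e * star U := by
    intro e
    have hstar : star U = Uᵀ := by
      rw [Matrix.star_eq_conjTranspose, conjTranspose_eq_transpose_of_trivial]
    rw [hstar]
    rw [Matrix.transpose_mul, Matrix.transpose_mul, Matrix.transpose_transpose,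
      Matrix.diagonal_transpose]
    noncomm_ring
  refine ⟨U * D' * star U, ?_, ?_, ?_, ?_⟩
  · rw [hAeq, key, key, hDD]
  · rw [hAeq, key, key, hD'D]
  · rw [hAeq, key, hD, hD', diagonal_mul_diagonal]
    exact hsymm _
  · rw [hAeq, key, hD, hD', diagonal_mul_diagonal]
    exact hsymm _

lemma mulVec_sum' {ι κ : Type*} [Fintype ι] (s : Finset κ) (A : κ → Matrix ι ι ℝ) (x : ι → ℝ) :
    (∑ a ∈ s, A a) *ᵥ x = ∑ a ∈ s, A a *ᵥ x := by
  induction s using Finset.cons_induction with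
  | empty => simp
  | cons a s ha ih => simp [Finset.sum_cons, Matrix.add_mulVec, ih]

lemma dotProduct_sum' {ι κ : Type*} [Fintype ι] (s : Finset κ) (y : ι → ℝ) (f : κ → ι → ℝ) :
    y ⬝ᵥ (∑ a ∈ s, f a) = ∑ a ∈ s, y ⬝ᵥ f a := by
  induction s using Finset.cons_induction with
  | empty => simp
  | cons a s ha ih => simp [Finset.sum_cons, dotProduct_add, ih]

lemma vecMulVec_mulVec' {ι : Type*} [Fintype ι] (a b x : ι → ℝ) :
    vecMulVec a b *ᵥ x = (b ⬝ᵥ x) • a := by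
  funext i
  simp only [Matrix.mulVec, dotProduct, vecMulVec_apply, Pi.smul_apply, smul_eq_mul,
    Finset.sum_mul]
  exact Finset.sum_congr rfl fun j _ => by ring

lemma quadform {ι : Type*} [Fintype ι] (W : ι → ι → ℝ) (b : ι → ι → ι → ℝ) (x y : ι → ℝ) :
    y ⬝ᵥ ((1 / 2 : ℝ) • ∑ u, ∑ v, W u v • vecMulVec (b u v) (b u v)) *ᵥ x
      = (1 / 2) * ∑ u, ∑ v, W u v * ((b u v ⬝ᵥ x) * (b u v ⬝ᵥ y)) := by
  rw [Matrix.smul_mulVec, mulVec_sum']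
  have h1 : ∀ u : ι, (∑ v, W u v • vecMulVec (b u v) (b u v)) *ᵥ x
      = ∑ v, (W u v * (b u v ⬝ᵥ x)) • b u v := by
    intro u
    rw [mulVec_sum']
    refine Finset.sum_congr rfl fun v _ => ?_
    rw [Matrix.smul_mulVec, vecMulVec_mulVec', smul_smul]
  simp only [h1]
  rw [dotProduct_smul, dotProduct_sum', smul_eq_mul]
  congr 1
  refine Finset.sum_congr rfl fun u _ => ?_
  rw [dotProduct_sum']
  refine Finset.sum_congr rfl fun v _ => ?_
  rw [dotProduct_smul, smul_eq_mul, dotProduct_comm y (b u v)]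
  ring

lemma weighted_cs {κ : Type*} [Fintype κ] (w p q : κ → ℝ) (hw : ∀ e, 0 ≤ w e) :
    (∑ e, w e * (p e * q e)) ^ 2 ≤ (∑ e, w e * (p e * p e)) * (∑ e, w e * (q e * q e)) := by
  have h := Finset.sum_mul_sq_le_sq_mul_sq Finset.univ
    (fun e => Real.sqrt (w e) * p e) (fun e => Real.sqrt (w e) * q e)
  have e1 : ∀ e : κ, (Real.sqrt (w e) * p e) * (Real.sqrt (w e) * q e) = w e * (p e * q e) := by
    intro e
    rw [show (Real.sqrt (w e) * p e) * (Real.sqrt (w e) * q e)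
        = (Real.sqrt (w e) * Real.sqrt (w e)) * (p e * q e) by ring, Real.mul_self_sqrt (hw e)]
  have e2 : ∀ e : κ, (Real.sqrt (w e) * p e) ^ 2 = w e * (p e * p e) := by
    intro e
    rw [show (Real.sqrt (w e) * p e) ^ 2
        = (Real.sqrt (w e) * Real.sqrt (w e)) * (p e * p e) by ring, Real.mul_self_sqrt (hw e)]
  have e3 : ∀ e : κ, (Real.sqrt (w e) * q e) ^ 2 = w e * (q e * q e) := by
    intro e
    rw [show (Real.sqrt (w e) * q e) ^ 2
        = (Real.sqrt (w e) * Real.sqrt (w e)) * (q e * q e) by ring, Real.mul_self_sqrt (hw e)]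
  simp only [e1, e2, e3] at h
  exact h

def gfun (ℓ i0 d k : ℕ) : ℕ := min (min (Nat.dist k i0) (ℓ - Nat.dist k i0)) d

lemma gfun_lip (ℓ i0 d a : ℕ) (hi0 : i0 < ℓ) (ha : a < ℓ) :
    gfun ℓ i0 d ((a + 1) % ℓ) ≤ gfun ℓ i0 d a + 1 ∧
      gfun ℓ i0 d a ≤ gfun ℓ i0 d ((a + 1) % ℓ) + 1 := by
  unfold gfun
  rcases eq_or_lt_of_le (Nat.succ_le_of_lt ha) with h | h
  · rw [← h, Nat.mod_self]
    simp only [Nat.dist]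
    omega
  · rw [Nat.mod_eq_of_lt h]
    simp only [Nat.dist]
    omega

/-- The energy bilinear form associated to a weight function. -/
def Sform {ι : Type*} [Fintype ι] (W : ι → ι → ℝ) (z y : ι → ℝ) : ℝ :=
  ∑ e : ι × ι, W e.1 e.2 * ((z e.1 - z e.2) * (y e.1 - y e.2))

lemma Sform_expand {ι : Type*} [Fintype ι] (W : ι → ι → ℝ) (z y : ι → ℝ) :
    Sform W z y = ∑ u, ∑ v, W u v * ((z u - z v) * (y u - y v)) := by
  rw [Sform, Fintype.sum_prod_type]

lemma Sform_nonneg {ι : Type*} [Fintype ι] {W : ι → ι → ℝ} (hW : ∀ u v, 0 ≤ W u v)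
    (z : ι → ℝ) : 0 ≤ Sform W z z :=
  Finset.sum_nonneg fun e _ => mul_nonneg (hW _ _) (mul_self_nonneg _)

lemma Sform_cs {ι : Type*} [Fintype ι] {W : ι → ι → ℝ} (hW : ∀ u v, 0 ≤ W u v)
    (z y : ι → ℝ) : (Sform W z y) ^ 2 ≤ Sform W z z * Sform W y y :=
  weighted_cs _ _ _ (fun e => hW e.1 e.2)

lemma Sform_term_zero {ι : Type*} [Fintype ι] {W : ι → ι → ℝ} (hW : ∀ u v, 0 ≤ W u v)
    {z : ι → ℝ} (hz : Sform W z z = 0) (u v : ι) (hne : W u v ≠ 0) : z u = z v := by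
  have h0 : ∀ e ∈ (Finset.univ : Finset (ι × ι)),
      W e.1 e.2 * ((z e.1 - z e.2) * (z e.1 - z e.2)) = 0 :=
    (Finset.sum_eq_zero_iff_of_nonneg
      (fun e _ => mul_nonneg (hW _ _) (mul_self_nonneg _))).mp hz
  have h1 := h0 (u, v) (Finset.mem_univ _)
  rcases mul_eq_zero.mp h1 with h | h
  · exact absurd h hne
  · exact sub_eq_zero.mp (mul_self_eq_zero.mp h)

lemma quadform' {ι : Type*} [Fintype ι] (W : ι → ι → ℝ) (b : ι → ι → ι → ℝ)
    (hb : ∀ u v z, b u v ⬝ᵥ z = z u - z v) (x y : ι → ℝ) :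
    y ⬝ᵥ ((1 / 2 : ℝ) • ∑ u, ∑ v, W u v • vecMulVec (b u v) (b u v)) *ᵥ x
      = (1 / 2) * Sform W x y := by
  rw [quadform, Sform_expand]
  congr 1
  exact Finset.sum_congr rfl fun u _ => Finset.sum_congr rfl fun v _ => by rw [hb, hb]

set_option maxHeartbeats 2000000 in
/-- In the block cycle graph with `ℓ = m⁴` blocks of size `s = m` (so `n = m⁵`),
cliques and complete bipartite graphs between consecutive blocks of edge weight
`m² = n^{2/5}`, plus a unit-weight crossing edge between blocks at cyclic distance at
least `c·ℓ`, there is a potential vector `x` with `(x_s - x_t)² ≥ c²/4` and total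
energy at most an absolute constant `K`; hence the effective resistance of the
crossing edge is at least `c²/(4K) = Ω(1)`. -/
theorem stmt15 : ∃ K : ℝ, 0 < K ∧
    ∀ (m : ℕ), 2 ≤ m → ∀ (c : ℝ), 0 < c → c ≤ 1 / 2 →
    ∀ (vs vt : Fin (m ^ 4) × Fin m),
    c * ((m : ℝ) ^ 4) ≤
      ((min (Nat.dist vs.1.val vt.1.val) (m ^ 4 - Nat.dist vs.1.val vt.1.val) : ℕ) : ℝ) →
    ∀ (W : (Fin (m ^ 4) × Fin m) → (Fin (m ^ 4) × Fin m) → ℝ),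
    (W = fun u v =>
      (if u ≠ v ∧ (u.1 = v.1 ∨ (u.1.val + 1) % m ^ 4 = v.1.val ∨
          (v.1.val + 1) % m ^ 4 = u.1.val)
        then ((m : ℝ) ^ 2) else 0) +
      (if (u = vs ∧ v = vt) ∨ (u = vt ∧ v = vs) then 1 else 0)) →
    ∀ (bvec : (Fin (m ^ 4) × Fin m) → (Fin (m ^ 4) × Fin m) →
        ((Fin (m ^ 4) × Fin m) → ℝ)),
    (bvec = fun u v i => (if i = u then (1 : ℝ) else 0) - if i = v then 1 else 0) →
    ∀ (L : Matrix (Fin (m ^ 4) × Fin m) (Fin (m ^ 4) × Fin m) ℝ),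
    (L = (1 / 2 : ℝ) • ∑ u, ∑ v, W u v • vecMulVec (bvec u v) (bvec u v)) →
    ∃ x : (Fin (m ^ 4) × Fin m) → ℝ,
      c ^ 2 / 4 ≤ (x vs - x vt) ^ 2 ∧
      x ⬝ᵥ L.mulVec x ≤ K ∧
      c ^ 2 / (4 * K) ≤ (bvec vs vt) ⬝ᵥ (pinv L).mulVec (bvec vs vt) := by
  classical
  refine ⟨1, one_pos, ?_⟩
  intro m hm c hc hc2 vs vt hdist W hW bvec hb L hL
  have hm0 : 0 < m := by omega
  have hℓpos : 0 < m ^ 4 := by positivity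
  have hmR : (2 : ℝ) ≤ (m : ℝ) := by exact_mod_cast hm
  set d : ℕ := min (Nat.dist vs.1.val vt.1.val) (m ^ 4 - Nat.dist vs.1.val vt.1.val) with hd
  have hcd : c * (m : ℝ) ^ 4 ≤ (d : ℝ) := hdist
  have hdR : (0 : ℝ) < (d : ℝ) := by
    have h1 : (0 : ℝ) < c * (m : ℝ) ^ 4 := by positivity
    linarith
  have hd0 : 0 < d := by exact_mod_cast hdR
  -- the potential vector
  set x : Fin (m ^ 4) × Fin m → ℝ :=
    (fun u => c / 2 * ((gfun (m ^ 4) vs.1.val d u.1.val : ℝ) / (d : ℝ))) with hxdef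
  have hgvs : gfun (m ^ 4) vs.1.val d vs.1.val = 0 := by
    simp [gfun, Nat.dist_self]
  have hgvt : gfun (m ^ 4) vs.1.val d vt.1.val = d := by
    rw [gfun, Nat.dist_comm, ← hd, min_self]
  have hxvs : x vs = 0 := by rw [hxdef]; simp [hgvs]
  have hxvt : x vt = c / 2 := by
    rw [hxdef]
    simp only [hgvt]
    field_simp
  have hxfst : ∀ u v : Fin (m ^ 4) × Fin m, u.1 = v.1 → x u = x v := by
    intro u v h
    rw [hxdef]
    simp only [h]
  have hlip : ∀ u v : Fin (m ^ 4) × Fin m, (u.1.val + 1) % m ^ 4 = v.1.val →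
      (x u - x v) * (x u - x v) ≤ (c / (2 * (d : ℝ))) ^ 2 := by
    intro u v huv
    have h1 := gfun_lip (m ^ 4) vs.1.val d u.1.val vs.1.isLt u.1.isLt
    rw [huv] at h1
    set p : ℕ := gfun (m ^ 4) vs.1.val d u.1.val with hp
    set q : ℕ := gfun (m ^ 4) vs.1.val d v.1.val with hq
    have hc1 : ((q : ℝ)) ≤ (p : ℝ) + 1 := by exact_mod_cast h1.1
    have hc2' : ((p : ℝ)) ≤ (q : ℝ) + 1 := by exact_mod_cast h1.2
    have habs : ((p : ℝ) - q) * ((p : ℝ) - q) ≤ 1 := by nlinarith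
    have hrw : x u - x v = (c / (2 * (d : ℝ))) * ((p : ℝ) - q) := by
      rw [hxdef]
      simp only
      rw [← hp, ← hq]
      field_simp
    rw [hrw]
    have h2 : (c / (2 * (d : ℝ))) ^ 2 * (((p : ℝ) - q) * ((p : ℝ) - q))
        ≤ (c / (2 * (d : ℝ))) ^ 2 * 1 :=
      mul_le_mul_of_nonneg_left habs (sq_nonneg _)
    calc (c / (2 * (d : ℝ)) * ((p : ℝ) - q)) * (c / (2 * (d : ℝ)) * ((p : ℝ) - q))
        = (c / (2 * (d : ℝ))) ^ 2 * (((p : ℝ) - q) * ((p : ℝ) - q)) := by ring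
      _ ≤ (c / (2 * (d : ℝ))) ^ 2 := by simpa using h2
  -- dot products with bvec
  have hbdot : ∀ (u v : Fin (m ^ 4) × Fin m) (z : Fin (m ^ 4) × Fin m → ℝ),
      bvec u v ⬝ᵥ z = z u - z v := by
    intro u v z
    rw [hb]
    simp [dotProduct, sub_mul, ite_mul, Finset.sum_sub_distrib, Finset.sum_ite_eq']
  have hQ : ∀ z y : Fin (m ^ 4) × Fin m → ℝ,
      y ⬝ᵥ L *ᵥ z = (1 / 2) * Sform W z y := by
    intro z y
    rw [hL]
    exact quadform' W bvec hbdot z y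
  have hWnn : ∀ u v : Fin (m ^ 4) × Fin m, 0 ≤ W u v := by
    intro u v
    rw [hW]
    dsimp only
    apply add_nonneg <;> (split_ifs <;> positivity)
  -- energy bound
  have hxd2 : (0:ℝ) ≤ (c / (2 * (d : ℝ))) ^ 2 := sq_nonneg _
  have hterm : ∀ e : (Fin (m ^ 4) × Fin m) × (Fin (m ^ 4) × Fin m),
      W e.1 e.2 * ((x e.1 - x e.2) * (x e.1 - x e.2)) ≤
        (m:ℝ)^2 * (c / (2 * (d : ℝ)))^2 *
          (if (e.1.1.val + 1) % m ^ 4 = e.2.1.val then (1:ℝ) else 0)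
        + (m:ℝ)^2 * (c / (2 * (d : ℝ)))^2 *
          (if (e.2.1.val + 1) % m ^ 4 = e.1.1.val then (1:ℝ) else 0)
        + (if e.1 = vs ∧ e.2 = vt then (1:ℝ) else 0) * (c^2/4)
        + (if e.1 = vt ∧ e.2 = vs then (1:ℝ) else 0) * (c^2/4) := by
    rintro ⟨u, v⟩
    dsimp only
    rw [hW]
    dsimp only
    rw [add_mul]
    have hind1 : (0:ℝ) ≤ (m:ℝ)^2 * (c / (2 * (d : ℝ)))^2 *
        (if (u.1.val + 1) % m ^ 4 = v.1.val then (1:ℝ) else 0) := by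
      split_ifs <;> positivity
    have hind2 : (0:ℝ) ≤ (m:ℝ)^2 * (c / (2 * (d : ℝ)))^2 *
        (if (v.1.val + 1) % m ^ 4 = u.1.val then (1:ℝ) else 0) := by
      split_ifs <;> positivity
    have hindA : (0:ℝ) ≤ (if u = vs ∧ v = vt then (1:ℝ) else 0) * (c^2/4) := by
      split_ifs <;> positivity
    have hindB : (0:ℝ) ≤ (if u = vt ∧ v = vs then (1:ℝ) else 0) * (c^2/4) := by
      split_ifs <;> positivity
    have hA : (if u ≠ v ∧ (u.1 = v.1 ∨ (u.1.val + 1) % m ^ 4 = v.1.val ∨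
          (v.1.val + 1) % m ^ 4 = u.1.val) then ((m : ℝ) ^ 2) else 0) *
          ((x u - x v) * (x u - x v)) ≤
        (m:ℝ)^2 * (c / (2 * (d : ℝ)))^2 *
          (if (u.1.val + 1) % m ^ 4 = v.1.val then (1:ℝ) else 0)
        + (m:ℝ)^2 * (c / (2 * (d : ℝ)))^2 *
          (if (v.1.val + 1) % m ^ 4 = u.1.val then (1:ℝ) else 0) := by
      by_cases hcond : u ≠ v ∧ (u.1 = v.1 ∨ (u.1.val + 1) % m ^ 4 = v.1.val ∨
          (v.1.val + 1) % m ^ 4 = u.1.val)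
      · rw [if_pos hcond]
        rcases hcond.2 with heq | hsucc | hsucc
        · rw [hxfst u v heq]
          simp only [sub_self, mul_zero]
          linarith
        · rw [if_pos hsucc]
          have h1 := hlip u v hsucc
          have h2 : (m:ℝ)^2 * ((x u - x v) * (x u - x v)) ≤
              (m:ℝ)^2 * (c / (2 * (d : ℝ)))^2 :=
            mul_le_mul_of_nonneg_left h1 (by positivity)
          linarith
        · rw [if_pos hsucc]
          have h1 := hlip v u hsucc
          have h1' : (x u - x v) * (x u - x v) ≤ (c / (2 * (d : ℝ)))^2 := by
            nlinarith [h1]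
          have h2 : (m:ℝ)^2 * ((x u - x v) * (x u - x v)) ≤
              (m:ℝ)^2 * (c / (2 * (d : ℝ)))^2 :=
            mul_le_mul_of_nonneg_left h1' (by positivity)
          linarith
      · rw [if_neg hcond, zero_mul]
        linarith
    have hB : (if (u = vs ∧ v = vt) ∨ (u = vt ∧ v = vs) then (1:ℝ) else 0) *
          ((x u - x v) * (x u - x v)) ≤
        (if u = vs ∧ v = vt then (1:ℝ) else 0) * (c^2/4)
        + (if u = vt ∧ v = vs then (1:ℝ) else 0) * (c^2/4) := by
      by_cases hcond : (u = vs ∧ v = vt) ∨ (u = vt ∧ v = vs)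
      · rw [if_pos hcond, one_mul]
        rcases hcond with ⟨h1, h2⟩ | ⟨h1, h2⟩
        · rw [h1, h2]
          have hval : (x vs - x vt) * (x vs - x vt) = c^2/4 := by
            rw [hxvs, hxvt]; ring
          rw [hval, if_pos (⟨rfl, rfl⟩ : vs = vs ∧ vt = vt), one_mul]
          have h0 : (0:ℝ) ≤ (if vs = vt ∧ vt = vs then (1:ℝ) else 0) * (c^2/4) := by
            split_ifs <;> positivity
          linarith
        · rw [h1, h2]
          have hval : (x vt - x vs) * (x vt - x vs) = c^2/4 := by
            rw [hxvs, hxvt]; ring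
          rw [hval, if_pos (⟨rfl, rfl⟩ : vt = vt ∧ vs = vs), one_mul]
          have h0 : (0:ℝ) ≤ (if vt = vs ∧ vs = vt then (1:ℝ) else 0) * (c^2/4) := by
            split_ifs <;> positivity
          linarith
      · rw [if_neg hcond, zero_mul]
        linarith
    linarith
  -- counting sums
  have hinner : ∀ k : ℕ, k < m ^ 4 →
      (∑ v : Fin (m ^ 4) × Fin m, (if k = v.1.val then (1:ℝ) else 0)) = (m:ℝ) := by
    intro k hk
    rw [Fintype.sum_prod_type]
    have hstep : ∀ v1 : Fin (m ^ 4),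
        (∑ _v2 : Fin m, (if k = v1.val then (1:ℝ) else 0))
          = (if v1 = (⟨k, hk⟩ : Fin (m ^ 4)) then (m:ℝ) else 0) := by
      intro v1
      rw [Finset.sum_const, Finset.card_univ, Fintype.card_fin]
      by_cases h : v1 = (⟨k, hk⟩ : Fin (m ^ 4))
      · rw [if_pos h, if_pos (by rw [h])]
        simp
      · rw [if_neg h, if_neg, smul_zero]
        intro hkv
        exact h (Fin.ext hkv.symm)
    rw [Finset.sum_congr rfl fun v1 _ => hstep v1, Finset.sum_ite_eq']
    simp
  have hN1 : (∑ e : (Fin (m ^ 4) × Fin m) × (Fin (m ^ 4) × Fin m),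
      (if (e.1.1.val + 1) % m ^ 4 = e.2.1.val then (1:ℝ) else 0)) = (m:ℝ)^4 * m * m := by
    rw [Fintype.sum_prod_type]
    rw [Finset.sum_congr rfl fun u _ => hinner ((u.1.val + 1) % m ^ 4) (Nat.mod_lt _ hℓpos)]
    rw [Finset.sum_const, Finset.card_univ]
    simp only [Fintype.card_prod, Fintype.card_fin, nsmul_eq_mul]
    push_cast
    ring
  have hN2 : (∑ e : (Fin (m ^ 4) × Fin m) × (Fin (m ^ 4) × Fin m),
      (if (e.2.1.val + 1) % m ^ 4 = e.1.1.val then (1:ℝ) else 0)) = (m:ℝ)^4 * m * m := by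
    refine (Fintype.sum_equiv (Equiv.prodComm _ _) _ _ fun e => rfl).trans hN1
  have hpair : ∀ a b : Fin (m ^ 4) × Fin m,
      (∑ e : (Fin (m ^ 4) × Fin m) × (Fin (m ^ 4) × Fin m),
        (if e.1 = a ∧ e.2 = b then (1:ℝ) else 0)) = 1 := by
    intro a b
    have hcongr : ∀ e : (Fin (m ^ 4) × Fin m) × (Fin (m ^ 4) × Fin m),
        (if e.1 = a ∧ e.2 = b then (1:ℝ) else 0) = (if e = (a, b) then (1:ℝ) else 0) := by
      intro e
      refine if_congr ?_ rfl rfl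
      exact ⟨fun h => Prod.ext_iff.mpr h, fun h => Prod.ext_iff.mp h⟩
    rw [Finset.sum_congr rfl fun e _ => hcongr e, Finset.sum_ite_eq']
    simp
  have hSx : Sform W x x ≤ 2 * ((m:ℝ)^2 * (c / (2 * (d : ℝ)))^2 * ((m:ℝ)^4 * m * m))
      + 2 * (c^2/4) := by
    calc Sform W x x ≤ ∑ e : (Fin (m ^ 4) × Fin m) × (Fin (m ^ 4) × Fin m),
        ((m:ℝ)^2 * (c / (2 * (d : ℝ)))^2 *
          (if (e.1.1.val + 1) % m ^ 4 = e.2.1.val then (1:ℝ) else 0)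
        + (m:ℝ)^2 * (c / (2 * (d : ℝ)))^2 *
          (if (e.2.1.val + 1) % m ^ 4 = e.1.1.val then (1:ℝ) else 0)
        + (if e.1 = vs ∧ e.2 = vt then (1:ℝ) else 0) * (c^2/4)
        + (if e.1 = vt ∧ e.2 = vs then (1:ℝ) else 0) * (c^2/4)) :=
          Finset.sum_le_sum fun e _ => hterm e
      _ = 2 * ((m:ℝ)^2 * (c / (2 * (d : ℝ)))^2 * ((m:ℝ)^4 * m * m)) + 2 * (c^2/4) := by
          rw [Finset.sum_add_distrib, Finset.sum_add_distrib, Finset.sum_add_distrib,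
            ← Finset.mul_sum, ← Finset.mul_sum, ← Finset.sum_mul, ← Finset.sum_mul,
            hN1, hN2, hpair, hpair]
          ring
  have hmain : (m:ℝ)^2 * (c / (2 * (d : ℝ)))^2 * ((m:ℝ)^4 * m * m) ≤ 1/4 := by
    have hsq : (c * (m:ℝ)^4)^2 ≤ ((d:ℝ))^2 := by
      have := pow_le_pow_left₀ (by positivity : (0:ℝ) ≤ c * (m:ℝ)^4) hcd 2
      exact this
    have hexpand : (m:ℝ)^2 * (c / (2 * (d : ℝ)))^2 * ((m:ℝ)^4 * m * m)
        = (c * (m:ℝ)^4)^2 / (4 * ((d:ℝ))^2) := by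
      field_simp
      ring
    rw [hexpand, div_le_div_iff₀ (by positivity) (by norm_num : (0:ℝ) < 4)]
    nlinarith [hsq]
  have henergy : x ⬝ᵥ L *ᵥ x ≤ 1 := by
    rw [hQ x x]
    have hcc : c^2 ≤ 1/4 := by nlinarith
    linarith [hSx, hmain, hcc]
  -- symmetry of L
  have hLt : Lᵀ = L := by
    rw [hL, transpose_smul]
    congr 1
    rw [transpose_sum]
    refine Finset.sum_congr rfl fun u _ => ?_
    rw [transpose_sum]
    refine Finset.sum_congr rfl fun v _ => ?_
    rw [transpose_smul]
    congr 1
    ext i j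
    rw [transpose_apply, vecMulVec_apply, vecMulVec_apply, mul_comm]
  have hHerm : L.IsHermitian := by
    show Lᴴ = L
    rw [conjTranspose_eq_transpose_of_trivial]
    exact hLt
  obtain ⟨hP1, hP2, hP3, hP4⟩ := pinv_spec (penrose_exists hHerm)
  have hsymQ : ∀ w z : Fin (m ^ 4) × Fin m → ℝ, (L *ᵥ w) ⬝ᵥ z = w ⬝ᵥ (L *ᵥ z) := by
    intro w z
    conv_lhs => rw [← hLt]
    rw [mulVec_transpose]
    exact (Matrix.dotProduct_mulVec w L z).symm
  have hker0 : ∀ z : Fin (m ^ 4) × Fin m → ℝ, Sform W z z = 0 → L *ᵥ z = 0 := by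
    intro z hz
    have h0 : ∀ y, y ⬝ᵥ (L *ᵥ z) = 0 := by
      intro y
      rw [hQ z y]
      have h1 := Sform_cs hWnn z y
      rw [hz, zero_mul] at h1
      have h2 : Sform W z y = 0 := by nlinarith [sq_nonneg (Sform W z y)]
      rw [h2, mul_zero]
    exact dotProduct_self_eq_zero.mp (h0 (L *ᵥ z))
  set v0 : Fin (m ^ 4) × Fin m := (⟨0, hℓpos⟩, ⟨0, hm0⟩) with hv0
  have hconst : ∀ z : Fin (m ^ 4) × Fin m → ℝ, Sform W z z = 0 → ∀ u, z u = z v0 := by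
    intro z hz
    have hedge : ∀ u v, W u v ≠ 0 → z u = z v := fun u v h => Sform_term_zero hWnn hz u v h
    have hmRpos : (0:ℝ) < (m:ℝ) := by linarith
    have hWne : ∀ u v : Fin (m ^ 4) × Fin m, u ≠ v →
        (u.1 = v.1 ∨ (u.1.val + 1) % m ^ 4 = v.1.val ∨ (v.1.val + 1) % m ^ 4 = u.1.val) →
        W u v ≠ 0 := by
      intro u v h1 h2
      rw [hW]
      dsimp only
      rw [if_pos ⟨h1, h2⟩]
      have hge : (0:ℝ) ≤ (if (u = vs ∧ v = vt) ∨ (u = vt ∧ v = vs) then (1:ℝ) else 0) := by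
        split_ifs <;> norm_num
      have hpos : (0:ℝ) < (m:ℝ)^2 := by positivity
      linarith
    have hblock : ∀ (i : Fin (m ^ 4)) (a b : Fin m), z (i, a) = z (i, b) := by
      intro i a b
      by_cases hab : a = b
      · rw [hab]
      · exact hedge _ _ (hWne _ _ (fun h => hab (Prod.ext_iff.mp h).2) (Or.inl rfl))
    have hstep : ∀ (i j : Fin (m ^ 4)), (i.val + 1) % m ^ 4 = j.val →
        ∀ (a b : Fin m), z (i, a) = z (j, b) := by
      intro i j hij a b
      have hij' : i ≠ j := by
        intro h
        rw [h] at hij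
        rcases Nat.lt_or_ge (j.val + 1) (m ^ 4) with hlt | hge
        · rw [Nat.mod_eq_of_lt hlt] at hij; omega
        · have hj : j.val < m ^ 4 := j.isLt
          have h16 : 16 ≤ m ^ 4 := by
            calc 16 = 2 ^ 4 := by norm_num
              _ ≤ m ^ 4 := Nat.pow_le_pow_left hm 4
          have hje : j.val + 1 = m ^ 4 := by omega
          rw [hje, Nat.mod_self] at hij
          omega
      exact hedge _ _ (hWne _ _ (fun h => hij' (Prod.ext_iff.mp h).1) (Or.inr (Or.inl hij)))
    have hall : ∀ (k : ℕ) (hk : k < m ^ 4) (a : Fin m), z (⟨k, hk⟩, a) = z v0 := by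
      intro k
      induction k with
      | zero => intro hk a; exact hblock _ a _
      | succ n ih =>
        intro hk a
        have hn : n < m ^ 4 := by omega
        have hmod : ((⟨n, hn⟩ : Fin (m ^ 4)).val + 1) % m ^ 4
            = ((⟨n + 1, hk⟩ : Fin (m ^ 4)) : Fin (m ^ 4)).val := Nat.mod_eq_of_lt hk
        calc z (⟨n + 1, hk⟩, a) = z (⟨n, hn⟩, (⟨0, hm0⟩ : Fin m)) :=
              (hstep _ _ hmod (⟨0, hm0⟩ : Fin m) a).symm
          _ = z v0 := ih hn _
    intro u
    exact hall u.1.val u.1.isLt u.2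
  -- range of L contains bvec vs vt
  set T := Matrix.mulVecLin L with hT
  have hTapp : ∀ z, T z = L *ᵥ z := by
    intro z
    rw [hT, Matrix.mulVecLin_apply]
  have hkerT : LinearMap.ker T = Submodule.span ℝ {(fun _ => (1:ℝ) : Fin (m ^ 4) × Fin m → ℝ)} := by
    apply le_antisymm
    · intro z hz
      rw [LinearMap.mem_ker, hTapp] at hz
      have hSz : Sform W z z = 0 := by
        have h1 : z ⬝ᵥ (L *ᵥ z) = 0 := by rw [hz, dotProduct_zero]
        rw [hQ z z] at h1
        linarith
      rw [Submodule.mem_span_singleton]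
      refine ⟨z v0, funext fun u => ?_⟩
      simp only [Pi.smul_apply, smul_eq_mul, mul_one]
      exact (hconst z hSz u).symm
    · rw [Submodule.span_le, Set.singleton_subset_iff, SetLike.mem_coe, LinearMap.mem_ker, hTapp]
      apply hker0
      rw [Sform]
      exact Finset.sum_eq_zero fun e _ => by simp
  set φ : ((Fin (m ^ 4) × Fin m) → ℝ) →ₗ[ℝ] ℝ :=
    { toFun := fun z => ∑ i, z i,
      map_add' := fun a b => by simp [Finset.sum_add_distrib],
      map_smul' := fun r a => by simp [Finset.mul_sum] } with hφ
  have hφapp : ∀ z : (Fin (m ^ 4) × Fin m) → ℝ, φ z = ∑ i, z i := fun z => rfl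
  have hones : ∀ z : (Fin (m ^ 4) × Fin m) → ℝ, (fun _ => (1:ℝ)) ⬝ᵥ z = ∑ i, z i := by
    intro z
    simp [dotProduct]
  have hrange_le : LinearMap.range T ≤ LinearMap.ker φ := by
    rintro w ⟨z, rfl⟩
    rw [LinearMap.mem_ker, hφapp, hTapp, ← hones, hQ]
    have h1 : Sform W z (fun _ => (1:ℝ)) = 0 := by
      rw [Sform]
      exact Finset.sum_eq_zero fun e _ => by simp
    rw [h1, mul_zero]
  have hcard : Fintype.card (Fin (m ^ 4) × Fin m) = m ^ 4 * m := by simp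
  have hcard0 : 0 < Fintype.card (Fin (m ^ 4) × Fin m) := by
    rw [hcard]
    exact Nat.mul_pos hℓpos hm0
  have hsurj : Function.Surjective φ := by
    intro r
    refine ⟨fun _ => r / (Fintype.card (Fin (m ^ 4) × Fin m) : ℝ), ?_⟩
    rw [hφapp, Finset.sum_const, Finset.card_univ, nsmul_eq_mul]
    have : ((Fintype.card (Fin (m ^ 4) × Fin m) : ℝ)) ≠ 0 := by
      exact_mod_cast hcard0.ne'
    field_simp
  have hrk1 := LinearMap.finrank_range_add_finrank_ker T
  have hrk2 := LinearMap.finrank_range_add_finrank_ker φ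
  rw [Module.finrank_pi] at hrk1 hrk2
  have hkerdim : Module.finrank ℝ (LinearMap.ker T) = 1 := by
    rw [hkerT]
    apply finrank_span_singleton
    intro h
    have h1 := congrFun h v0
    norm_num at h1
  have hrangeφdim : Module.finrank ℝ (LinearMap.range φ) = 1 := by
    rw [LinearMap.range_eq_top.mpr hsurj, finrank_top, Module.finrank_self]
  have hEqdim : Module.finrank ℝ (LinearMap.range T) = Module.finrank ℝ (LinearMap.ker φ) := by
    omega
  have hrange_eq : LinearMap.range T = LinearMap.ker φ :=
    Submodule.eq_of_le_of_finrank_eq hrange_le hEqdim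
  have hbφ : φ (bvec vs vt) = 0 := by
    rw [hφapp, hb]
    simp [Finset.sum_sub_distrib, Finset.sum_ite_eq']
  have hbmem : bvec vs vt ∈ LinearMap.range T := by
    rw [hrange_eq, LinearMap.mem_ker]
    exact hbφ
  obtain ⟨y, hy⟩ := hbmem
  have hy' : L *ᵥ y = bvec vs vt := by rw [← hTapp]; exact hy
  -- conclusion
  refine ⟨x, ?_, henergy, ?_⟩
  · rw [hxvs, hxvt]
    have h1 : ((0:ℝ) - c / 2) ^ 2 = c ^ 2 / 4 := by ring
    linarith [h1]
  · have hBb : bvec vs vt ⬝ᵥ (pinv L) *ᵥ (bvec vs vt) = y ⬝ᵥ (L *ᵥ y) := by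
      conv_lhs => rw [← hy']
      rw [Matrix.mulVec_mulVec, hsymQ y ((pinv L * L) *ᵥ y), Matrix.mulVec_mulVec,
        ← mul_assoc, hP1]
    have hr0 : 0 ≤ y ⬝ᵥ (L *ᵥ y) := by
      rw [hQ y y]
      have := Sform_nonneg hWnn y
      linarith
    have hbx : bvec vs vt ⬝ᵥ x = -(c / 2) := by
      rw [hbdot, hxvs, hxvt]
      ring
    have hxy : y ⬝ᵥ (L *ᵥ x) = bvec vs vt ⬝ᵥ x := by
      conv_rhs => rw [← hy']
      exact (hsymQ y x).symm
    have hcs := Sform_cs hWnn x y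
    have hq1 : y ⬝ᵥ L *ᵥ x = (1/2) * Sform W x y := hQ x y
    have hq2 : x ⬝ᵥ L *ᵥ x = (1/2) * Sform W x x := hQ x x
    have hq3 : y ⬝ᵥ L *ᵥ y = (1/2) * Sform W y y := hQ y y
    have h5 : (bvec vs vt ⬝ᵥ x) ^ 2 ≤ (x ⬝ᵥ L *ᵥ x) * (y ⬝ᵥ L *ᵥ y) := by
      rw [← hxy, hq1, hq2, hq3]
      nlinarith [hcs]
    have h6 : (bvec vs vt ⬝ᵥ x) ^ 2 = c ^ 2 / 4 := by
      rw [hbx]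
      ring
    have h7 : (x ⬝ᵥ L *ᵥ x) * (y ⬝ᵥ L *ᵥ y) ≤ 1 * (y ⬝ᵥ L *ᵥ y) :=
      mul_le_mul_of_nonneg_right henergy hr0
    have h8 : c ^ 2 / (4 * (1:ℝ)) = c ^ 2 / 4 := by norm_num
    rw [h8, hBb]
    linarith [h5, h6, h7]
end

section
/- Let G = (V, E, w) be an n-vertex weighted graph where the strength k_f of edge f is the maximum k such that some k-strongly-connected (vertex-induced) component of G contains both endpoints of f. Then Σ_{f∈E} w_f / k_f ≤ n - 1. -/
open Matrix Finset

section BK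
variable {n : ℕ}

def cutW (w : Fin n → Fin n → ℝ) (U S : Finset (Fin n)) : ℝ :=
  ∑ a ∈ S, ∑ b ∈ U \ S, w a b

def strSet (w : Fin n → Fin n → ℝ) (V : Finset (Fin n)) (u v : Fin n) : Set ℝ :=
  {k : ℝ | ∃ U : Finset (Fin n), U ⊆ V ∧ u ∈ U ∧ v ∈ U ∧
    ∀ S : Finset (Fin n), S ⊆ U → S.Nonempty → S ≠ U → k ≤ cutW w U S}

noncomputable def strG (w : Fin n → Fin n → ℝ) (V : Finset (Fin n)) (u v : Fin n) : ℝ :=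
  sSup (strSet w V u v)

variable {w : Fin n → Fin n → ℝ}

lemma bddAbove_strSet (hnn : ∀ u v, 0 ≤ w u v) {V : Finset (Fin n)} {u v : Fin n}
    (huv : u ≠ v) : BddAbove (strSet w V u v) := by
  refine ⟨∑ b, w u b, ?_⟩
  rintro k ⟨U, hUV, hu, hv, hcut⟩
  have h1 : ({u} : Finset (Fin n)) ⊆ U := by simpa using hu
  have hne : ({u} : Finset (Fin n)) ≠ U := by
    intro h
    rw [← h] at hv
    exact huv (Finset.mem_singleton.mp hv).symm
  have := hcut {u} h1 ⟨u, Finset.mem_singleton_self u⟩ hne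
  calc k ≤ cutW w U {u} := this
    _ = ∑ b ∈ U \ {u}, w u b := by simp [cutW]
    _ ≤ ∑ b, w u b :=
      Finset.sum_le_sum_of_subset_of_nonneg (Finset.subset_univ _) (fun i _ _ => hnn u i)

lemma zero_mem_strSet (hnn : ∀ u v, 0 ≤ w u v) {V : Finset (Fin n)} {u v : Fin n}
    (hu : u ∈ V) (hv : v ∈ V) : (0 : ℝ) ∈ strSet w V u v := by
  refine ⟨{u, v}, ?_, by simp, by simp, fun S _ _ _ => ?_⟩
  · intro x hx
    simp only [Finset.mem_insert, Finset.mem_singleton] at hx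
    rcases hx with rfl | rfl <;> assumption
  · exact Finset.sum_nonneg fun a _ => Finset.sum_nonneg fun b _ => hnn a b

lemma le_strG (hnn : ∀ u v, 0 ≤ w u v) {V : Finset (Fin n)} {u v : Fin n} {k : ℝ}
    (huv : u ≠ v) (hk : k ∈ strSet w V u v) : k ≤ strG w V u v :=
  le_csSup (bddAbove_strSet hnn huv) hk

lemma strG_mono (hnn : ∀ u v, 0 ≤ w u v) {S V : Finset (Fin n)} {u v : Fin n}
    (hu : u ∈ S) (hv : v ∈ S) (hSV : S ⊆ V) (huv : u ≠ v) :
    strG w S u v ≤ strG w V u v := by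
  refine csSup_le_csSup (bddAbove_strSet hnn huv) ⟨0, zero_mem_strSet hnn hu hv⟩ ?_
  rintro k ⟨U, hUS, h1, h2, h3⟩
  exact ⟨U, hUS.trans hSV, h1, h2, h3⟩

lemma strG_ge_w (hsymm : ∀ u v, w u v = w v u) (hnn : ∀ u v, 0 ≤ w u v)
    (hloop : ∀ u, w u u = 0) {S : Finset (Fin n)} {u v : Fin n}
    (hu : u ∈ S) (hv : v ∈ S) (hpos : 0 < w u v) : w u v ≤ strG w S u v := by
  have huv : u ≠ v := by
    rintro rfl; rw [hloop] at hpos; exact lt_irrefl 0 hpos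
  apply le_strG hnn huv
  refine ⟨{u, v}, ?_, by simp, by simp, ?_⟩
  · intro x hx
    simp only [Finset.mem_insert, Finset.mem_singleton] at hx
    rcases hx with rfl | rfl <;> assumption
  · intro S' hsub hne hneq
    have hcase : S' = {u} ∨ S' = {v} := by
      by_cases hu' : u ∈ S' <;> by_cases hv' : v ∈ S'
      · exfalso
        apply hneq
        apply Finset.Subset.antisymm hsub
        intro x hx
        simp only [Finset.mem_insert, Finset.mem_singleton] at hx
        rcases hx with rfl | rfl <;> assumption
      · left
        apply Finset.Subset.antisymm
        · intro x hx
          have := hsub hx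
          simp only [Finset.mem_insert, Finset.mem_singleton] at this
          rcases this with rfl | rfl
          · exact Finset.mem_singleton_self _
          · exact absurd hx hv'
        · simpa using hu'
      · right
        apply Finset.Subset.antisymm
        · intro x hx
          have := hsub hx
          simp only [Finset.mem_insert, Finset.mem_singleton] at this
          rcases this with rfl | rfl
          · exact absurd hx hu'
          · exact Finset.mem_singleton_self _
        · simpa using hv'
      · obtain ⟨x, hx⟩ := hne
        have := hsub hx
        simp only [Finset.mem_insert, Finset.mem_singleton] at this
        rcases this with rfl | rfl <;> [exact absurd hx hu'; exact absurd hx hv']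
    have hsd1 : ({u, v} : Finset (Fin n)) \ {u} = {v} := by
      ext x
      simp only [Finset.mem_sdiff, Finset.mem_insert, Finset.mem_singleton]
      constructor
      · rintro ⟨rfl | rfl, h2⟩
        · exact absurd rfl h2
        · rfl
      · rintro rfl; exact ⟨Or.inr rfl, fun h => huv h.symm⟩
    have hsd2 : ({u, v} : Finset (Fin n)) \ {v} = {u} := by
      ext x
      simp only [Finset.mem_sdiff, Finset.mem_insert, Finset.mem_singleton]
      constructor
      · rintro ⟨rfl | rfl, h2⟩
        · rfl
        · exact absurd rfl h2
      · rintro rfl; exact ⟨Or.inl rfl, huv⟩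
    rcases hcase with rfl | rfl
    · simp [cutW, hsd1]
    · simp [cutW, hsd2, hsymm u v]

lemma strG_symm (hsymm : ∀ u v, w u v = w v u) (V : Finset (Fin n)) (u v : Fin n) :
    strG w V u v = strG w V v u := by
  unfold strG
  congr 1
  ext k
  constructor <;> rintro ⟨U, a, b, c, d⟩ <;> exact ⟨U, a, c, b, d⟩

lemma term_mono (hsymm : ∀ u v, w u v = w v u) (hnn : ∀ u v, 0 ≤ w u v)
    (hloop : ∀ u, w u u = 0) {S V : Finset (Fin n)} {u v : Fin n}
    (hu : u ∈ S) (hv : v ∈ S) (hSV : S ⊆ V) :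
    w u v / strG w V u v ≤ w u v / strG w S u v := by
  by_cases h : w u v = 0
  · simp [h]
  have hw : 0 < w u v := (hnn u v).lt_of_ne (Ne.symm h)
  have huv : u ≠ v := by rintro rfl; rw [hloop] at hw; exact lt_irrefl 0 hw
  have h1 : w u v ≤ strG w S u v := strG_ge_w hsymm hnn hloop hu hv hw
  have h2 : strG w S u v ≤ strG w V u v := strG_mono hnn hu hv hSV huv
  gcongr
  exact lt_of_lt_of_le hw h1

lemma bk_main (w : Fin n → Fin n → ℝ) (hsymm : ∀ u v, w u v = w v u)
    (hnn : ∀ u v, 0 ≤ w u v) (hloop : ∀ u, w u u = 0) :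
    ∀ (m : ℕ) (V : Finset (Fin n)), V.card ≤ m → V.Nonempty →
      (1/2 : ℝ) * ∑ u ∈ V, ∑ v ∈ V, w u v / strG w V u v ≤ (V.card : ℝ) - 1 := by
  intro m
  induction m with
  | zero =>
    intro V h hne
    rw [Finset.card_eq_zero.mp (Nat.le_zero.mp h)] at hne
    exact absurd hne (by simp)
  | succ m IH =>
    intro V hcard hne
    by_cases h1 : V.card ≤ 1
    · obtain ⟨a, rfl⟩ := Finset.card_eq_one.mp (le_antisymm h1 hne.card_pos)
      simp [hloop]
    push_neg at h1
    -- choose a minimum cut S of V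
    obtain ⟨u0, hu0⟩ := hne
    have hPne : (V.powerset.filter (fun S => S.Nonempty ∧ S ≠ V)).Nonempty := by
      refine ⟨{u0}, Finset.mem_filter.mpr ⟨Finset.mem_powerset.mpr (by simpa using hu0),
        ⟨u0, Finset.mem_singleton_self u0⟩, ?_⟩⟩
      intro h
      rw [← h] at h1
      simp at h1
    obtain ⟨S, hSP, hmin⟩ :=
      Finset.exists_min_image (V.powerset.filter (fun S => S.Nonempty ∧ S ≠ V)) (cutW w V) hPne
    rw [Finset.mem_filter, Finset.mem_powerset] at hSP
    obtain ⟨hSV, hSne, hSneV⟩ := hSP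
    set T : Finset (Fin n) := V \ S with hT
    have hdisj : Disjoint S T := Finset.disjoint_sdiff
    have hVST : S ∪ T = V := Finset.union_sdiff_of_subset hSV
    have hTV : T ⊆ V := Finset.sdiff_subset
    have hTne : T.Nonempty := by
      rw [hT, Finset.sdiff_nonempty]
      intro h
      exact hSneV (Finset.Subset.antisymm hSV h)
    have hcardST : S.card + T.card = V.card := by
      rw [hT, Finset.card_sdiff_of_subset hSV]
      have := Finset.card_le_card hSV
      omega
    have hScard : S.card < V.card := by
      have := hTne.card_pos
      omega
    have hTcard : T.card < V.card := by
      have := hSne.card_pos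
      omega
    -- min-cut lower bound on strengths within V
    have hcmem : ∀ u ∈ V, ∀ v ∈ V, cutW w V S ∈ strSet w V u v := by
      intro u hu v hv
      refine ⟨V, Finset.Subset.refl V, hu, hv, fun S' h1' h2' h3' => ?_⟩
      exact hmin S' (Finset.mem_filter.mpr ⟨Finset.mem_powerset.mpr h1', h2', h3'⟩)
    -- splitting sums
    have hsplit : ∀ g : Fin n → Fin n → ℝ, ∑ u ∈ V, ∑ v ∈ V, g u v =
        (∑ u ∈ S, ∑ v ∈ S, g u v) + (∑ u ∈ S, ∑ v ∈ T, g u v) +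
        ((∑ u ∈ T, ∑ v ∈ S, g u v) + (∑ u ∈ T, ∑ v ∈ T, g u v)) := by
      intro g
      rw [← hVST, Finset.sum_union hdisj]
      simp only [Finset.sum_union hdisj, Finset.sum_add_distrib]
    -- cross sums are equal
    have hcross : (∑ u ∈ T, ∑ v ∈ S, w u v / strG w V u v) =
        ∑ u ∈ S, ∑ v ∈ T, w u v / strG w V u v := by
      rw [Finset.sum_comm]
      refine Finset.sum_congr rfl fun u _ => Finset.sum_congr rfl fun v _ => ?_
      rw [hsymm u v, strG_symm hsymm]
    -- cross sum bound
    have hC : (∑ u ∈ S, ∑ v ∈ T, w u v / strG w V u v) ≤ 1 := by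
      by_cases hc : 0 < cutW w V S
      · have hterm : ∀ u ∈ S, ∀ v ∈ T, w u v / strG w V u v ≤ w u v / cutW w V S := by
          intro u hu v hv
          by_cases h : w u v = 0
          · simp [h]
          have hw : 0 < w u v := (hnn u v).lt_of_ne (Ne.symm h)
          have huv : u ≠ v := by rintro rfl; rw [hloop] at hw; exact lt_irrefl 0 hw
          have := le_strG hnn huv (hcmem u (hSV hu) v (hTV hv))
          gcongr
        calc (∑ u ∈ S, ∑ v ∈ T, w u v / strG w V u v)
            ≤ ∑ u ∈ S, ∑ v ∈ T, w u v / cutW w V S :=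
              Finset.sum_le_sum fun u hu => Finset.sum_le_sum fun v hv => hterm u hu v hv
          _ = cutW w V S / cutW w V S := by
              rw [cutW, ← hT]
              simp only [← Finset.sum_div]
          _ = 1 := div_self (ne_of_gt hc)
      · have hc0 : ∀ u ∈ S, ∀ v ∈ T, w u v = 0 := by
          have hle : cutW w V S ≤ 0 := not_lt.mp hc
          have h0 : cutW w V S = 0 := le_antisymm hle
            (Finset.sum_nonneg fun a _ => Finset.sum_nonneg fun b _ => hnn a b)
          rw [cutW, ← hT] at h0
          intro u hu v hv
          have h₁ := (Finset.sum_eq_zero_iff_of_nonneg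
            (fun a _ => Finset.sum_nonneg fun b _ => hnn a b)).mp h0 u hu
          exact (Finset.sum_eq_zero_iff_of_nonneg (fun b _ => hnn u b)).mp h₁ v hv
        have : (∑ u ∈ S, ∑ v ∈ T, w u v / strG w V u v) = 0 :=
          Finset.sum_eq_zero fun u hu => Finset.sum_eq_zero fun v hv => by
            simp [hc0 u hu v hv]
        rw [this]; norm_num
    -- induction on the two sides
    have hAmono : (∑ u ∈ S, ∑ v ∈ S, w u v / strG w V u v) ≤
        ∑ u ∈ S, ∑ v ∈ S, w u v / strG w S u v :=
      Finset.sum_le_sum fun u hu => Finset.sum_le_sum fun v hv =>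
        term_mono hsymm hnn hloop hu hv hSV
    have hBmono : (∑ u ∈ T, ∑ v ∈ T, w u v / strG w V u v) ≤
        ∑ u ∈ T, ∑ v ∈ T, w u v / strG w T u v :=
      Finset.sum_le_sum fun u hu => Finset.sum_le_sum fun v hv =>
        term_mono hsymm hnn hloop hu hv hTV
    have hIA := IH S (by omega) hSne
    have hIB := IH T (by omega) hTne
    rw [hsplit, hcross]
    have hcast : (S.card : ℝ) + (T.card : ℝ) = (V.card : ℝ) := by
      exact_mod_cast congrArg (Nat.cast : ℕ → ℝ) hcardST
    linarith

end BK

/-- Benczúr–Karger: for a weighted graph on `n` vertices, where the strength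
`str u v` of an edge is the largest `k` such that both endpoints lie in a common
vertex-induced subgraph all of whose cuts have weight at least `k`, we have
`Σ_{edges f} w_f / k_f ≤ n - 1`. -/
theorem stmt19 {n : ℕ} (hn : 1 ≤ n) (w : Fin n → Fin n → ℝ)
    (hsymm : ∀ u v, w u v = w v u) (hnn : ∀ u v, 0 ≤ w u v)
    (hloop : ∀ u, w u u = 0)
    (str : Fin n → Fin n → ℝ)
    (hstr : ∀ u v, str u v = sSup {k : ℝ | ∃ U : Finset (Fin n), u ∈ U ∧ v ∈ U ∧
        ∀ S : Finset (Fin n), S ⊆ U → S.Nonempty → S ≠ U →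
          k ≤ ∑ a ∈ S, ∑ b ∈ U \ S, w a b}) :
    (1 / 2 : ℝ) * ∑ u, ∑ v, w u v / str u v ≤ (n : ℝ) - 1 := by
  have hstr' : ∀ u v, str u v = strG w Finset.univ u v := by
    intro u v
    rw [hstr]
    unfold strG strSet cutW
    congr 1
    ext k
    constructor
    · rintro ⟨U, h1, h2, h3⟩
      exact ⟨U, Finset.subset_univ U, h1, h2, h3⟩
    · rintro ⟨U, _, h1, h2, h3⟩
      exact ⟨U, h1, h2, h3⟩
  have hne : (Finset.univ : Finset (Fin n)).Nonempty :=
    ⟨⟨0, hn⟩, Finset.mem_univ _⟩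
  have hmain := bk_main w hsymm hnn hloop (Finset.univ.card) Finset.univ le_rfl hne
  simp only [Finset.card_univ, Fintype.card_fin] at hmain
  calc (1/2 : ℝ) * ∑ u, ∑ v, w u v / str u v
      = (1/2 : ℝ) * ∑ u, ∑ v, w u v / strG w Finset.univ u v := by
        congr 1
        exact Finset.sum_congr rfl fun u _ => Finset.sum_congr rfl fun v _ => by
          rw [hstr' u v]
    _ ≤ (n : ℝ) - 1 := hmain
end
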